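/- arXiv:2509.01573 — 15 statements merged into one kernel-verified Lean document; each statement's English description precedes it below -/
import Mathlib

section
/- Let p be a prime and S a commutative ring in which p is a non-zero-divisor and which is p-adically complete (complete and separated for the topology defined by the ideals p^k·S). Let h ≥ 1, n ≥ 1 and m ≥ n+1 be integers, and let A, B be h×h matrices over S with A·B ≡ p^n·1 modulo p^m. Then there exist h×h matrices A', B' over S with A'·B' = B'·A' = p^n·1, A ≡ A' modulo p^{m−n}, and B ≡ B' modulo p^{m−n}. -/
/-- Matrix-correction lemma: over a `p`-adically complete ring `S` in which `p` is a
non-zero-divisor, an approximate `p^n`-isogeny pair `(A, B)` (i.e. `A·B ≡ p^n·1 mod p^m`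
with `m ≥ n + 1`) can be corrected, modulo `p^(m-n)`, to an exact `p^n`-isogeny pair. -/
theorem stmt_0 (p : ℕ) (hp : p.Prime) (S : Type) [CommRing S]
    (hpnzd : (p : S) ∈ nonZeroDivisors S)
    (hcomp : IsAdicComplete (Ideal.span {(p : S)}) S)
    (h n m : ℕ) (hh : 1 ≤ h) (hn : 1 ≤ n) (hm : n + 1 ≤ m)
    (A B : Matrix (Fin h) (Fin h) S)
    (hAB : ∃ C : Matrix (Fin h) (Fin h) S,
      A * B - (p : S) ^ n • (1 : Matrix (Fin h) (Fin h) S) = (p : S) ^ m • C) :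
    ∃ A' B' : Matrix (Fin h) (Fin h) S,
      A' * B' = (p : S) ^ n • (1 : Matrix (Fin h) (Fin h) S) ∧
      B' * A' = (p : S) ^ n • (1 : Matrix (Fin h) (Fin h) S) ∧
      (∃ C : Matrix (Fin h) (Fin h) S, A - A' = (p : S) ^ (m - n) • C) ∧
      (∃ C : Matrix (Fin h) (Fin h) S, B - B' = (p : S) ^ (m - n) • C) := by
  haveI := hcomp
  obtain ⟨C, hC⟩ := hAB
  set U : Matrix (Fin h) (Fin h) S := 1 + (p : S) ^ (m - n) • C with hU
  have hpm : (p : S) ^ m = (p : S) ^ n * (p : S) ^ (m - n) := by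
    rw [← pow_add]; congr 1; omega
  have hABU : A * B = (p : S) ^ n • U := by
    have h1 : A * B = (p : S) ^ n • (1 : Matrix (Fin h) (Fin h) S) + (p : S) ^ m • C := by
      linear_combination (norm := module) hC
    rw [h1, hU, smul_add, smul_smul, hpm]
  -- det U is a unit
  set I := Ideal.span {(p : S)} with hI
  have hdetU : IsUnit U.det := by
    have hmk : (Ideal.Quotient.mk I) U.det = 1 := by
      have hmap1 : (Ideal.Quotient.mk I).mapMatrix U = 1 := by
        ext i j
        have hmem : (p : S) ^ (m - n) * C i j ∈ I := by
          apply Ideal.mul_mem_right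
          apply Ideal.pow_mem_of_mem
          · exact Ideal.subset_span rfl
          · omega
        simp only [hU, Matrix.map_apply, Matrix.add_apply, Matrix.smul_apply, smul_eq_mul, RingHom.mapMatrix_apply,
          map_add, Ideal.Quotient.eq_zero_iff_mem.mpr hmem, add_zero]
        by_cases hij : i = j <;> simp [Matrix.one_apply, hij]
      rw [RingHom.map_det, hmap1, Matrix.det_one]
    have hxI : U.det - 1 ∈ I := by
      rw [← Ideal.Quotient.eq_zero_iff_mem, map_sub, hmk, map_one, sub_self]
    have hxJ : U.det - 1 ∈ Ideal.jacobson (⊥ : Ideal S) :=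
      IsAdicComplete.le_jacobson_bot I hxI
    have := Ideal.mem_jacobson_bot.mp hxJ 1
    simpa using this
  have hUV : U * U⁻¹ = 1 := Matrix.mul_nonsing_inv U hdetU
  have hVU : U⁻¹ * U = 1 := Matrix.nonsing_inv_mul U hdetU
  refine ⟨A, B * U⁻¹, ?_, ?_, ⟨0, by simp⟩, ⟨B * C * U⁻¹, ?_⟩⟩
  · rw [← mul_assoc, hABU, Matrix.smul_mul, hUV]
  · -- B' * A' = p^n • 1
    set X : Matrix (Fin h) (Fin h) S := B * U⁻¹ * A with hX
    have hAX : A * (B * U⁻¹) = (p : S) ^ n • (1 : Matrix (Fin h) (Fin h) S) := by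
      rw [← mul_assoc, hABU, Matrix.smul_mul, hUV]
    have hXX : X * X = (p : S) ^ n • X := by
      calc X * X = B * U⁻¹ * (A * (B * U⁻¹)) * A := by
            simp only [hX, mul_assoc]
        _ = (p : S) ^ n • X := by
            rw [hAX, Matrix.mul_smul, mul_one, hX, Matrix.smul_mul]
    have hdetX : X.det = ((p : S) ^ n) ^ h := by
      have : X.det = (B * U⁻¹).det * A.det := Matrix.det_mul _ _
      rw [this, mul_comm, ← Matrix.det_mul, hAX, Matrix.det_smul, Matrix.det_one,
        mul_one, Fintype.card_fin]
    have hzero : X * (X - (p : S) ^ n • 1) = 0 := by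
      rw [mul_sub, hXX, Matrix.mul_smul, mul_one, sub_self]
    have hadj : X.det • (X - (p : S) ^ n • 1) = 0 := by
      calc X.det • (X - (p : S) ^ n • 1) = X.adjugate * X * (X - (p : S) ^ n • 1) := by
            rw [Matrix.adjugate_mul, Matrix.smul_mul, one_mul]
        _ = X.adjugate * (X * (X - (p : S) ^ n • 1)) := by rw [mul_assoc]
        _ = 0 := by rw [hzero, mul_zero]
    have hXeq : X - (p : S) ^ n • 1 = 0 := by
      ext i j
      have := congrFun (congrFun hadj i) j
      simp only [Matrix.smul_apply, Matrix.zero_apply, smul_eq_mul] at this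
      have hnzd : X.det ∈ nonZeroDivisors S := by
        rw [hdetX]; exact pow_mem (pow_mem hpnzd n) h
      exact hnzd.2 _ (by rwa [mul_comm] at this)
    exact sub_eq_zero.mp hXeq
  · -- B - B * U⁻¹ = p^(m-n) • (B * C * U⁻¹)
    have : (p : S) ^ (m - n) • (B * C * U⁻¹) = (B * ((p : S) ^ (m - n) • C)) * U⁻¹ := by
      rw [Matrix.mul_smul, Matrix.smul_mul]
    rw [this]
    have hU1 : (p : S) ^ (m - n) • C = U - 1 := by
      rw [hU, add_sub_cancel_left]
    rw [hU1, mul_sub, mul_one, Matrix.sub_mul, mul_assoc, hUV, mul_one]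
end

section
/- For every prime p and all integers h, n ≥ 1 there exists an integer t ≥ 0, depending only on p, h and n, with the following property. Let S be a commutative ℤ_p-algebra in which p is a non-zero-divisor (equivalently, a flat ℤ_p-algebra). Let (A₁,B₁) and (A₂,B₂) be p^n-isogeny pairs of h×h matrices over S, let m ≥ t be an integer, and let g be an invertible h×h matrix over S such that g·A₁ ≡ A₂ modulo p^m and B₁·g⁻¹ ≡ B₂ modulo p^m. Then there exists a unique invertible h×h matrix g̃ over S such that g̃·A₁ = A₂ and B₁·g̃⁻¹ = B₂. -/
/-!
Write `c = p ^ n`. If `g A₁ ≡ A₂` modulo `c`, then `A₂ B₁ ≡ g A₁ B₁ = c g` is divisible by `c`,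
say `A₂ B₁ = c X`; dually `A₁ B₂ = c Y`. Since `c` is a non-zero-divisor it can be cancelled:
`c X A₁ = A₂ B₁ A₁ = c A₂` gives `X A₁ = A₂`, and `c² X Y = A₂ (B₁ A₁) B₂ = c² 1` gives `X Y = 1`.
The same cancellation shows that `A₁` is right regular, whence uniqueness. So `t = n` works.
-/

structure IsIsogenyPair {S M : Type*} [CommRing S] [Ring M] [Algebra S M]
    (c : S) (A B : M) : Prop where
  mul_eq_smul_one : A * B = c • 1
  mul_eq_smul_one' : B * A = c • 1

namespace IsIsogenyPair

variable {S M : Type*} [CommRing S] [Ring M] [Algebra S M] {c : S} {A₁ B₁ A₂ B₂ X Y C D g : M}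

theorem isRightRegular (hAB : A₁ * B₁ = c • 1) (hc : IsSMulRegular M c) : IsRightRegular A₁ :=
  fun x y hxy ↦ hc <| by
    simpa only [mul_assoc, hAB, mul_smul_comm, mul_one] using congrArg (· * B₁) hxy

theorem mul_eq_of_mul_eq_smul (hBA : B₁ * A₁ = c • 1) (hc : IsSMulRegular M c)
    (hX : A₂ * B₁ = c • X) : X * A₁ = A₂ :=
  hc <| show c • (X * A₁) = c • A₂ by rw [← smul_mul_assoc, ← hX, mul_assoc, hBA, mul_smul_comm, mul_one]

theorem mul_eq_of_mul_eq_smul' (hBA : B₁ * A₁ = c • 1) (hc : IsSMulRegular M c)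
    (hY : A₁ * B₂ = c • Y) : B₁ * Y = B₂ :=
  hc <| show c • (B₁ * Y) = c • B₂ by rw [← mul_smul_comm, ← hY, ← mul_assoc, hBA, smul_mul_assoc, one_mul]

theorem mul_eq_one_of_mul_eq_smul (hBA₁ : B₁ * A₁ = c • 1) (hAB₂ : A₂ * B₂ = c • 1)
    (hc : IsSMulRegular M c) (hX : A₂ * B₁ = c • X) (hY : A₁ * B₂ = c • Y) : X * Y = 1 :=
  hc <| hc <|
    calc c • c • (X * Y) = (c • X) * (c • Y) := by rw [smul_mul_assoc, mul_smul_comm]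
      _ = A₂ * (B₁ * A₁) * B₂ := by rw [← hX, ← hY, mul_assoc, mul_assoc, mul_assoc]
      _ = c • c • 1 := by rw [hBA₁, mul_smul_comm, mul_one, smul_mul_assoc, hAB₂]

def unitOfMulEqSmul (h₁ : IsIsogenyPair c A₁ B₁) (h₂ : IsIsogenyPair c A₂ B₂)
    (hc : IsSMulRegular M c) (hX : A₂ * B₁ = c • X) (hY : A₁ * B₂ = c • Y) : Mˣ where
  val := X
  inv := Y
  val_inv := mul_eq_one_of_mul_eq_smul h₁.mul_eq_smul_one' h₂.mul_eq_smul_one hc hX hY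
  inv_val := mul_eq_one_of_mul_eq_smul h₂.mul_eq_smul_one' h₁.mul_eq_smul_one hc hY hX

theorem mul_eq_smul_of_mul_sub_eq_smul (hAB : A₁ * B₁ = c • 1) (hg : g * A₁ - A₂ = c • C) :
    A₂ * B₁ = c • (g - C * B₁) := by
  rw [← sub_sub_cancel (g * A₁) A₂, hg, sub_mul, mul_assoc, hAB, mul_smul_comm, mul_one,
    smul_mul_assoc, smul_sub]

theorem mul_eq_smul_of_mul_sub_eq_smul' (hAB : A₁ * B₁ = c • 1) (hg : B₁ * g - B₂ = c • D) :
    A₁ * B₂ = c • (g - A₁ * D) := by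
  rw [← sub_sub_cancel (B₁ * g) B₂, hg, mul_sub, ← mul_assoc, hAB, smul_mul_assoc, one_mul,
    mul_smul_comm, smul_sub]

theorem existsUnique_of_sub_eq_smul (h₁ : IsIsogenyPair c A₁ B₁) (h₂ : IsIsogenyPair c A₂ B₂)
    (hc : IsSMulRegular M c) (g : Mˣ) (hA : g * A₁ - A₂ = c • C)
    (hB : B₁ * ↑g⁻¹ - B₂ = c • D) :
    ∃! u : Mˣ, u * A₁ = A₂ ∧ B₁ * ↑u⁻¹ = B₂ := by
  have hX := mul_eq_smul_of_mul_sub_eq_smul h₁.mul_eq_smul_one hA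
  have hY := mul_eq_smul_of_mul_sub_eq_smul' h₁.mul_eq_smul_one hB
  refine ⟨unitOfMulEqSmul h₁ h₂ hc hX hY, ⟨mul_eq_of_mul_eq_smul h₁.mul_eq_smul_one' hc hX,
    mul_eq_of_mul_eq_smul' h₁.mul_eq_smul_one' hc hY⟩, fun u hu ↦ Units.ext ?_⟩
  exact isRightRegular h₁.mul_eq_smul_one hc <|
    hu.1.trans (mul_eq_of_mul_eq_smul h₁.mul_eq_smul_one' hc hX).symm

end IsIsogenyPair

theorem stmt_1_general (p : ℕ) [Fact p.Prime] (h n : ℕ) :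
    ∃ t : ℕ, ∀ (S : Type) [CommRing S] [Algebra ℤ_[p] S],
      (p : S) ∈ nonZeroDivisors S →
      ∀ A₁ B₁ A₂ B₂ : Matrix (Fin h) (Fin h) S,
        A₁ * B₁ = (p : S) ^ n • (1 : Matrix (Fin h) (Fin h) S) →
        B₁ * A₁ = (p : S) ^ n • (1 : Matrix (Fin h) (Fin h) S) →
        A₂ * B₂ = (p : S) ^ n • (1 : Matrix (Fin h) (Fin h) S) →
        B₂ * A₂ = (p : S) ^ n • (1 : Matrix (Fin h) (Fin h) S) →
        ∀ m : ℕ, t ≤ m →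
        ∀ g : (Matrix (Fin h) (Fin h) S)ˣ,
          (∃ C : Matrix (Fin h) (Fin h) S,
            (g : Matrix (Fin h) (Fin h) S) * A₁ - A₂ = (p : S) ^ m • C) →
          (∃ C : Matrix (Fin h) (Fin h) S,
            B₁ * ((g⁻¹ : (Matrix (Fin h) (Fin h) S)ˣ) : Matrix (Fin h) (Fin h) S) - B₂
              = (p : S) ^ m • C) →
          ∃! gt : (Matrix (Fin h) (Fin h) S)ˣ,
            (gt : Matrix (Fin h) (Fin h) S) * A₁ = A₂ ∧
            B₁ * ((gt⁻¹ : (Matrix (Fin h) (Fin h) S)ˣ) : Matrix (Fin h) (Fin h) S) = B₂ := by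
  refine ⟨n, fun S _ _ hp A₁ B₁ A₂ B₂ hAB₁ hBA₁ hAB₂ hBA₂ m hm g ⟨C, hC⟩ ⟨D, hD⟩ ↦ ?_⟩
  have hreg : IsSMulRegular (Matrix (Fin h) (Fin h) S) ((p : S) ^ n) :=
    (isRegular_iff_mem_nonZeroDivisors.mpr (pow_mem hp n)).left.isSMulRegular.matrix
  have hpm : (p : S) ^ m = (p : S) ^ n * (p : S) ^ (m - n) := by
    rw [← pow_add, Nat.add_sub_cancel' hm]
  rw [hpm, mul_smul] at hC hD
  exact IsIsogenyPair.existsUnique_of_sub_eq_smul ⟨hAB₁, hBA₁⟩ ⟨hAB₂, hBA₂⟩ hreg g hC hD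

/-- Rigidity of `p^n`-isogeny pairs of matrices: there is a constant `t`, depending
only on `p`, `h`, `n`, such that over any flat `ℤ_p`-algebra `S`, an invertible matrix
`g` intertwining two `p^n`-isogeny pairs modulo `p^m` with `m ≥ t` can be corrected to a
unique invertible matrix intertwining them exactly. -/
theorem stmt_1 (p : ℕ) [Fact p.Prime] (h n : ℕ) (hh : 1 ≤ h) (hn : 1 ≤ n) :
    ∃ t : ℕ, ∀ (S : Type) [CommRing S] [Algebra ℤ_[p] S],
      (p : S) ∈ nonZeroDivisors S →
      ∀ A₁ B₁ A₂ B₂ : Matrix (Fin h) (Fin h) S,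
        A₁ * B₁ = (p : S) ^ n • (1 : Matrix (Fin h) (Fin h) S) →
        B₁ * A₁ = (p : S) ^ n • (1 : Matrix (Fin h) (Fin h) S) →
        A₂ * B₂ = (p : S) ^ n • (1 : Matrix (Fin h) (Fin h) S) →
        B₂ * A₂ = (p : S) ^ n • (1 : Matrix (Fin h) (Fin h) S) →
        ∀ m : ℕ, t ≤ m →
        ∀ g : (Matrix (Fin h) (Fin h) S)ˣ,
          (∃ C : Matrix (Fin h) (Fin h) S,
            (g : Matrix (Fin h) (Fin h) S) * A₁ - A₂ = (p : S) ^ m • C) →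
          (∃ C : Matrix (Fin h) (Fin h) S,
            B₁ * ((g⁻¹ : (Matrix (Fin h) (Fin h) S)ˣ) : Matrix (Fin h) (Fin h) S) - B₂
              = (p : S) ^ m • C) →
          ∃! gt : (Matrix (Fin h) (Fin h) S)ˣ,
            (gt : Matrix (Fin h) (Fin h) S) * A₁ = A₂ ∧
            B₁ * ((gt⁻¹ : (Matrix (Fin h) (Fin h) S)ˣ) : Matrix (Fin h) (Fin h) S) = B₂ :=
  stmt_1_general p h n
end

section
/- For every prime p and all integers h, n ≥ 1 there exists an integer M ≥ 0, depending only on p, h and n, with the following property. Let S be a commutative ℤ_p-algebra in which p is a non-zero-divisor (equivalently, a flat ℤ_p-algebra). Let (A₁,B₁) and (A₂,B₂) be p^n-isogeny pairs of h×h matrices over S, let m ≥ M+1 be an integer, and let g be an invertible h×h matrix over S such that g·A₁ ≡ A₂ modulo p^m and B₁·g⁻¹ ≡ B₂ modulo p^m. Then there exists a unique invertible h×h matrix g̃ over S such that g̃·A₁ = A₂ and B₁·g̃⁻¹ = B₂, and moreover g̃ ≡ g modulo p^{m−M}. -/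
/-!
Over a ring in which `q = p^n` is a non-zero-divisor, a `q`-isogeny pair `(A, B)` makes `A`
right-cancellable, since `X * A * B = q • X`. So `X * A₁ = A₂` has at most one solution, and
`X * A₁ = A₂`, `B₁ * Y = B₂` force `X * Y = 1`, as `q • X * Y = X * A₁ * B₁ * Y = A₂ * B₂`.
If `g * A₁ - A₂ = p^m • C` with `m > n`, the error term is `p^(m-n) • C * B₁ * A₁`, so
`g - p^(m-n) • C * B₁` is an exact solution; correcting `g⁻¹` in the same way gives its inverse.
Thus `M = n` works.
-/

namespace Matrix

variable {ι R : Type*} [Fintype ι] [DecidableEq ι] [CommRing R] {q r : R}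
  {A₁ B₁ A₂ B₂ : Matrix ι ι R}

theorem mul_right_cancel_of_mul_eq_smul_one (hq : q ∈ nonZeroDivisors R)
    (h₁ : A₁ * B₁ = q • 1) {X Y : Matrix ι ι R} (h : X * A₁ = Y * A₁) : X = Y := by
  apply (isRegular_iff_mem_nonZeroDivisors.mpr hq).left.matrix
  change q • X = q • Y
  calc q • X = X * A₁ * B₁ := by rw [mul_assoc, h₁, mul_smul_one]
    _ = q • Y := by rw [h, mul_assoc, h₁, mul_smul_one]

theorem mul_eq_one_of_mul_eq_smul_one (hq : q ∈ nonZeroDivisors R)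
    (h₁ : A₁ * B₁ = q • 1) (h₂ : A₂ * B₂ = q • 1) {X Y : Matrix ι ι R}
    (hX : X * A₁ = A₂) (hY : B₁ * Y = B₂) : X * Y = 1 := by
  apply (isRegular_iff_mem_nonZeroDivisors.mpr hq).left.matrix
  change q • (X * Y) = q • 1
  calc q • (X * Y) = X * (A₁ * B₁) * Y := by rw [h₁, mul_smul_one, smul_mul]
    _ = q • 1 := by rw [← mul_assoc, hX, mul_assoc, hY, h₂]

theorem sub_smul_mul_mul_eq (hBA : B₁ * A₁ = q • 1) {g C : Matrix ι ι R}
    (hC : g * A₁ - A₂ = (r * q) • C) : (g - r • (C * B₁)) * A₁ = A₂ := by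
  rw [sub_mul, Matrix.smul_mul, mul_assoc, hBA, Matrix.mul_smul, mul_one, smul_smul, ← hC,
    sub_sub_cancel]

theorem mul_sub_smul_mul_eq (hBA : B₁ * A₁ = q • 1) {g D : Matrix ι ι R}
    (hD : B₁ * g - B₂ = (r * q) • D) : B₁ * (g - r • (A₁ * D)) = B₂ := by
  rw [mul_sub, Matrix.mul_smul, ← mul_assoc, hBA, Matrix.smul_mul, one_mul, smul_smul, ← hD,
    sub_sub_cancel]

end Matrix

theorem stmt_2_general (p : ℕ) [Fact p.Prime] (h n : ℕ) :
    ∃ M : ℕ, ∀ (S : Type) [CommRing S] [Algebra ℤ_[p] S],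
      (p : S) ∈ nonZeroDivisors S →
      ∀ A₁ B₁ A₂ B₂ : Matrix (Fin h) (Fin h) S,
        A₁ * B₁ = (p : S) ^ n • (1 : Matrix (Fin h) (Fin h) S) →
        B₁ * A₁ = (p : S) ^ n • (1 : Matrix (Fin h) (Fin h) S) →
        A₂ * B₂ = (p : S) ^ n • (1 : Matrix (Fin h) (Fin h) S) →
        B₂ * A₂ = (p : S) ^ n • (1 : Matrix (Fin h) (Fin h) S) →
        ∀ m : ℕ, M + 1 ≤ m →
        ∀ g : (Matrix (Fin h) (Fin h) S)ˣ,
          (∃ C : Matrix (Fin h) (Fin h) S,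
            (g : Matrix (Fin h) (Fin h) S) * A₁ - A₂ = (p : S) ^ m • C) →
          (∃ C : Matrix (Fin h) (Fin h) S,
            B₁ * ((g⁻¹ : (Matrix (Fin h) (Fin h) S)ˣ) : Matrix (Fin h) (Fin h) S) - B₂
              = (p : S) ^ m • C) →
          ∃ gt : (Matrix (Fin h) (Fin h) S)ˣ,
            ((gt : Matrix (Fin h) (Fin h) S) * A₁ = A₂ ∧
             B₁ * ((gt⁻¹ : (Matrix (Fin h) (Fin h) S)ˣ) : Matrix (Fin h) (Fin h) S) = B₂) ∧
            (∃ C : Matrix (Fin h) (Fin h) S,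
              (gt : Matrix (Fin h) (Fin h) S) - (g : Matrix (Fin h) (Fin h) S)
                = (p : S) ^ (m - M) • C) ∧
            (∀ gt' : (Matrix (Fin h) (Fin h) S)ˣ,
              (gt' : Matrix (Fin h) (Fin h) S) * A₁ = A₂ →
              B₁ * ((gt'⁻¹ : (Matrix (Fin h) (Fin h) S)ˣ) : Matrix (Fin h) (Fin h) S) = B₂ →
              gt' = gt) := by
  refine ⟨n, fun S _ _ hp A₁ B₁ A₂ B₂ h₁₁ h₁₂ h₂₁ _ m hm g ⟨C, hC⟩ ⟨D, hD⟩ => ?_⟩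
  have hq : (p : S) ^ n ∈ nonZeroDivisors S := pow_mem hp n
  have hpow : (p : S) ^ m = (p : S) ^ (m - n) * (p : S) ^ n := by
    rw [← pow_add, Nat.sub_add_cancel (by omega)]
  rw [hpow] at hC hD
  have hX := Matrix.sub_smul_mul_mul_eq h₁₂ hC
  have hY := Matrix.mul_sub_smul_mul_eq h₁₂ hD
  let gt := Units.mkOfMulEqOne _ _ (Matrix.mul_eq_one_of_mul_eq_smul_one hq h₁₁ h₂₁ hX hY)
  refine ⟨gt, ⟨hX, hY⟩, ⟨-(C * B₁), by simp [gt, smul_neg]⟩, fun gt' hA' _ => ?_⟩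
  exact Units.ext (Matrix.mul_right_cancel_of_mul_eq_smul_one hq h₁₁ (hA'.trans hX.symm))

/-- Strong rigidity of `p^n`-isogeny pairs of matrices: there is a constant `M`, depending
only on `p`, `h`, `n`, such that over any flat `ℤ_p`-algebra `S`, an invertible matrix `g`
intertwining two `p^n`-isogeny pairs modulo `p^m` with `m ≥ M + 1` can be corrected to a
unique invertible matrix `g̃` intertwining them exactly, with moreover `g̃ ≡ g mod p^(m-M)`. -/
theorem stmt_2 (p : ℕ) [Fact p.Prime] (h n : ℕ) (hh : 1 ≤ h) (hn : 1 ≤ n) :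
    ∃ M : ℕ, ∀ (S : Type) [CommRing S] [Algebra ℤ_[p] S],
      (p : S) ∈ nonZeroDivisors S →
      ∀ A₁ B₁ A₂ B₂ : Matrix (Fin h) (Fin h) S,
        A₁ * B₁ = (p : S) ^ n • (1 : Matrix (Fin h) (Fin h) S) →
        B₁ * A₁ = (p : S) ^ n • (1 : Matrix (Fin h) (Fin h) S) →
        A₂ * B₂ = (p : S) ^ n • (1 : Matrix (Fin h) (Fin h) S) →
        B₂ * A₂ = (p : S) ^ n • (1 : Matrix (Fin h) (Fin h) S) →
        ∀ m : ℕ, M + 1 ≤ m →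
        ∀ g : (Matrix (Fin h) (Fin h) S)ˣ,
          (∃ C : Matrix (Fin h) (Fin h) S,
            (g : Matrix (Fin h) (Fin h) S) * A₁ - A₂ = (p : S) ^ m • C) →
          (∃ C : Matrix (Fin h) (Fin h) S,
            B₁ * ((g⁻¹ : (Matrix (Fin h) (Fin h) S)ˣ) : Matrix (Fin h) (Fin h) S) - B₂
              = (p : S) ^ m • C) →
          ∃ gt : (Matrix (Fin h) (Fin h) S)ˣ,
            ((gt : Matrix (Fin h) (Fin h) S) * A₁ = A₂ ∧
             B₁ * ((gt⁻¹ : (Matrix (Fin h) (Fin h) S)ˣ) : Matrix (Fin h) (Fin h) S) = B₂) ∧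
            (∃ C : Matrix (Fin h) (Fin h) S,
              (gt : Matrix (Fin h) (Fin h) S) - (g : Matrix (Fin h) (Fin h) S)
                = (p : S) ^ (m - M) • C) ∧
            (∀ gt' : (Matrix (Fin h) (Fin h) S)ˣ,
              (gt' : Matrix (Fin h) (Fin h) S) * A₁ = A₂ →
              B₁ * ((gt'⁻¹ : (Matrix (Fin h) (Fin h) S)ˣ) : Matrix (Fin h) (Fin h) S) = B₂ →
              gt' = gt) :=
  stmt_2_general p h n
end

section
/- Let p be a prime and R a reduced commutative ring of characteristic p. Then multiplication by p is injective on W(R), and for every x ∈ W(R) and every integer k ≥ 1 one has F(V^k(x)) − (V^k(x))^p = p·(V^{k−1}(x) − p^{k(p−1)−1}·V^k(x^p)). Consequently the unique element δ(V^k(x)) ∈ W(R) satisfying p·δ(V^k(x)) = F(V^k(x)) − (V^k(x))^p is given by δ(V^k(x)) = V^{k−1}(x) − p^{k(p−1)−1}·V^k(x^p). -/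
section Aux

variable {p : ℕ} [hp : Fact p.Prime] {R : Type} [CommRing R] [CharP R p]

open WittVector

private lemma aux_V_pow (y : WittVector p R) (n : ℕ) :
    (verschiebung y) ^ (n + 1) = (p : WittVector p R) ^ n * verschiebung (y ^ (n + 1)) := by
  induction n with
  | zero => simp
  | succ n ih =>
    have proj : verschiebung (y ^ (n + 1) * frobenius (verschiebung y))
        = verschiebung (y ^ (n + 1)) * verschiebung y := verschiebung_mul_frobenius _ _
    calc (verschiebung y) ^ (n + 2)
        = (verschiebung y) ^ (n + 1) * verschiebung y := by ring
      _ = (p : WittVector p R) ^ n * (verschiebung (y ^ (n + 1)) * verschiebung y) := by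
            rw [ih]; ring
      _ = (p : WittVector p R) ^ n
            * verschiebung (y ^ (n + 1) * frobenius (verschiebung y)) := by rw [proj]
      _ = (p : WittVector p R) ^ n * verschiebung (y ^ (n + 2) * (p : WittVector p R)) := by
            rw [frobenius_verschiebung, show y ^ (n + 1) * (y * (p : WittVector p R)) = y ^ (n + 2) * (p : WittVector p R) by ring]
      _ = (p : WittVector p R) ^ (n + 1) * verschiebung (y ^ (n + 2)) := by
            have h : y ^ (n + 2) * (p : WittVector p R) = p • (y ^ (n + 2)) := by
              rw [nsmul_eq_mul]; ring
            rw [h, map_nsmul, nsmul_eq_mul]; push_cast; ring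

private lemma aux_V_smul (z : WittVector p R) (m : ℕ) :
    verschiebung ((p : WittVector p R) ^ m * z)
      = (p : WittVector p R) ^ m * verschiebung z := by
  have h1 : (p : WittVector p R) ^ m * z = (p ^ m) • z := by rw [nsmul_eq_mul]; push_cast; ring
  have h2 : (p : WittVector p R) ^ m * verschiebung z = (p ^ m) • verschiebung z := by
    rw [nsmul_eq_mul]; push_cast; ring
  rw [h1, h2, map_nsmul]

private lemma aux_iterate_V_pow_p (x : WittVector p R) (k : ℕ) :
    (verschiebung^[k] x) ^ p
      = (p : WittVector p R) ^ (k * (p - 1)) * verschiebung^[k] (x ^ p) := by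
  induction k with
  | zero => simp
  | succ k ih =>
    have hp1 : p - 1 + 1 = p := Nat.succ_pred_eq_of_pos hp.out.pos
    rw [Function.iterate_succ_apply', Function.iterate_succ_apply' verschiebung k]
    calc (verschiebung (verschiebung^[k] x)) ^ p
        = (verschiebung (verschiebung^[k] x)) ^ (p - 1 + 1) := by rw [hp1]
      _ = (p : WittVector p R) ^ (p - 1) * verschiebung ((verschiebung^[k] x) ^ (p - 1 + 1)) :=
            aux_V_pow _ _
      _ = (p : WittVector p R) ^ (p - 1) * verschiebung ((verschiebung^[k] x) ^ p) := by rw [hp1]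
      _ = (p : WittVector p R) ^ (p - 1)
            * verschiebung ((p : WittVector p R) ^ (k * (p - 1))
                * verschiebung^[k] (x ^ p)) := by rw [ih]
      _ = (p : WittVector p R) ^ (p - 1) * ((p : WittVector p R) ^ (k * (p - 1))
                * verschiebung (verschiebung^[k] (x ^ p))) := by rw [aux_V_smul]
      _ = (p : WittVector p R) ^ ((k + 1) * (p - 1))
            * verschiebung (verschiebung^[k] (x ^ p)) := by
            rw [← mul_assoc, ← pow_add, Nat.succ_mul, Nat.add_comm]

end Aux

/-- Over a reduced ring `R` of characteristic `p`, multiplication by `p` is injective on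
`W(R)`, and for `k ≥ 1` one has
`F(V^k x) - (V^k x)^p = p·(V^(k-1) x - p^(k(p-1)-1)·V^k(x^p))`; consequently the unique
`δ(V^k x)` with `p·δ(V^k x) = F(V^k x) - (V^k x)^p` equals `V^(k-1) x - p^(k(p-1)-1)·V^k(x^p)`. -/
theorem stmt_5 (p : ℕ) [Fact p.Prime] (R : Type) [CommRing R] [CharP R p] [IsReduced R] :
    Function.Injective (fun y : WittVector p R => (p : WittVector p R) * y) ∧
    ∀ (x : WittVector p R) (k : ℕ), 1 ≤ k →
      (WittVector.frobenius ((⇑(WittVector.verschiebung (p := p) (R := R)))^[k] x)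
          - ((⇑(WittVector.verschiebung (p := p) (R := R)))^[k] x) ^ p
        = (p : WittVector p R)
            * ((⇑(WittVector.verschiebung (p := p) (R := R)))^[k - 1] x
                - (p : WittVector p R) ^ (k * (p - 1) - 1)
                    * (⇑(WittVector.verschiebung (p := p) (R := R)))^[k] (x ^ p))) ∧
      ∀ d : WittVector p R,
        (p : WittVector p R) * d
            = WittVector.frobenius ((⇑(WittVector.verschiebung (p := p) (R := R)))^[k] x)
                - ((⇑(WittVector.verschiebung (p := p) (R := R)))^[k] x) ^ p →
        d = (⇑(WittVector.verschiebung (p := p) (R := R)))^[k - 1] x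
              - (p : WittVector p R) ^ (k * (p - 1) - 1)
                  * (⇑(WittVector.verschiebung (p := p) (R := R)))^[k] (x ^ p) := by
  have hp := (Fact.out : p.Prime)
  have hinj : Function.Injective (fun y : WittVector p R => (p : WittVector p R) * y) := by
    intro a b hab
    simp only at hab
    have hab' : a * (p : WittVector p R) = b * (p : WittVector p R) := by
      rw [mul_comm a, mul_comm b]; exact hab
    ext i
    have := congrArg (fun z : WittVector p R => z.coeff (i + 1)) hab'
    simp only [WittVector.mul_charP_coeff_succ] at this
    exact frobenius_inj R p this
  refine ⟨hinj, fun x k hk => ?_⟩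
  have hkp : 1 ≤ k * (p - 1) :=
    Nat.one_le_iff_ne_zero.mpr (Nat.mul_ne_zero (by omega) (by have := hp.two_le; omega))
  have key :
      WittVector.frobenius ((⇑(WittVector.verschiebung (p := p) (R := R)))^[k] x)
          - ((⇑(WittVector.verschiebung (p := p) (R := R)))^[k] x) ^ p
        = (p : WittVector p R)
            * ((⇑(WittVector.verschiebung (p := p) (R := R)))^[k - 1] x
                - (p : WittVector p R) ^ (k * (p - 1) - 1)
                    * (⇑(WittVector.verschiebung (p := p) (R := R)))^[k] (x ^ p)) := by
    have hk' : k = (k - 1) + 1 := by omega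
    have hF : WittVector.frobenius ((⇑(WittVector.verschiebung (p := p) (R := R)))^[k] x)
        = (p : WittVector p R) * (⇑(WittVector.verschiebung (p := p) (R := R)))^[k - 1] x := by
      conv_lhs => rw [hk', Function.iterate_succ_apply']
      rw [WittVector.frobenius_verschiebung]; ring
    rw [hF, aux_iterate_V_pow_p]
    have hpow : (p : WittVector p R) ^ (k * (p - 1))
        = (p : WittVector p R) * (p : WittVector p R) ^ (k * (p - 1) - 1) := by
      conv_lhs => rw [show k * (p - 1) = 1 + (k * (p - 1) - 1) by omega]
      rw [pow_add, pow_one]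
    rw [hpow]; ring
  exact ⟨key, fun d hd => hinj (by simpa [key] using hd)⟩
end

section
/- Let p be a prime, R a perfect commutative ring of characteristic p (i.e. the Frobenius a ↦ a^p is bijective), and J ⊆ R an ideal such that J^{p^r} ⊆ φ(J) for some integer r ≥ 1, where φ(J) denotes the image of J under the Frobenius automorphism φ of R (an ideal, since φ is a ring automorphism). For an integer m ≥ 0 let K_m ⊆ W(R) be the set of Witt vectors x whose i-th Witt coordinate lies in J^{p^{i+m}} for every i ≥ 0. Then: (i) K_m is an ideal of W(R); (ii) for every x ∈ K_m one has F(x) − x^p ∈ p·K_m (so K_m is a δ-ideal of the δ-ring W(R)); (iii) K_m is p-adically closed, i.e. any x ∈ W(R) lying in K_m + p^k·W(R) for every k ≥ 0 lies in K_m. -/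
/-- The set `K_m` of Witt vectors whose `i`-th coordinate lies in `J^(p^(i+m))`. -/
def wittK (p : ℕ) [Fact p.Prime] (R : Type) [CommRing R] (J : Ideal R) (m : ℕ) :
    Set (WittVector p R) :=
  {x : WittVector p R | ∀ i : ℕ, x.coeff i ∈ J ^ (p ^ (i + m))}

open MvPolynomial Finset WittVector

section WHG

variable {σ τ : Type*} {S : Type*} [CommRing S]

theorem whg_pow {w : σ → ℕ} {φ : MvPolynomial σ S} {d : ℕ}
    (h : φ.IsWeightedHomogeneous w d) (k : ℕ) :
    (φ ^ k).IsWeightedHomogeneous w (k * d) := by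
  induction k with
  | zero => simpa using isWeightedHomogeneous_one S w
  | succ k ih =>
    have h2 := ih.mul h
    rw [← pow_succ] at h2
    rwa [Nat.succ_mul]

theorem whg_rename {w : τ → ℕ} {φ : MvPolynomial σ S} {d : ℕ} (f : σ → τ)
    (h : φ.IsWeightedHomogeneous (w ∘ f) d) :
    (rename f φ).IsWeightedHomogeneous w d := by
  intro e he
  obtain ⟨u, rfl, hu⟩ := coeff_rename_ne_zero f φ e he
  have hw := h hu
  rw [← hw]
  rw [Finsupp.weight_apply, Finsupp.weight_apply,
    Finsupp.sum_mapDomain_index (fun b => zero_smul ℕ (w b))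
      (fun b m₁ m₂ => add_smul m₁ m₂ (w b))]
  rfl

theorem whg_smul_weight {w : σ → ℕ} {φ : MvPolynomial σ S} {d : ℕ}
    (h : φ.IsWeightedHomogeneous w d) (c : ℕ) :
    φ.IsWeightedHomogeneous (fun i => c * w i) (c * d) := by
  intro e he
  have hw := h he
  rw [Finsupp.weight_apply] at hw ⊢
  rw [Finsupp.sum] at hw ⊢
  rw [← hw, Finset.mul_sum]
  exact Finset.sum_congr rfl fun i _ => by
    simp only [smul_eq_mul]; ring

theorem whg_bind₁ {u : σ → ℕ} {Φ : MvPolynomial σ S} {d : ℕ}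
    (hΦ : Φ.IsWeightedHomogeneous u d) (w : τ → ℕ) (t : ℕ) (f : σ → MvPolynomial τ S)
    (hf : ∀ b, (f b).IsWeightedHomogeneous w (u b * t)) :
    (bind₁ f Φ).IsWeightedHomogeneous w (d * t) := by
  nth_rewrite 1 [Φ.as_sum]
  rw [map_sum]
  apply IsWeightedHomogeneous.sum
  intro e he
  rw [bind₁_monomial]
  have h1 : IsWeightedHomogeneous w (∏ i ∈ e.support, f i ^ e i)
      (∑ i ∈ e.support, e i * (u i * t)) :=
    IsWeightedHomogeneous.prod _ _ _ fun i _ => whg_pow (hf i) (e i)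
  have h2 := (isWeightedHomogeneous_C w (coeff e Φ)).mul h1
  rw [zero_add] at h2
  have key : ∑ i ∈ e.support, e i * (u i * t) = d * t := by
    have h3 := hΦ (mem_support_iff.mp he)
    rw [Finsupp.weight_apply, Finsupp.sum] at h3
    rw [← h3, Finset.sum_mul]
    exact Finset.sum_congr rfl fun i _ => by
      simp only [smul_eq_mul]; ring
  rwa [key] at h2

end WHG

section WittWHG

variable (p : ℕ) [hp : Fact p.Prime]

theorem whg_wittPolynomial (n : ℕ) :
    (wittPolynomial p ℚ n).IsWeightedHomogeneous (fun i => p ^ i) (p ^ n) := by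
  rw [wittPolynomial]
  apply IsWeightedHomogeneous.sum
  intro i hi
  apply isWeightedHomogeneous_monomial
  rw [Finsupp.weight_apply, Finsupp.sum_single_index]
  · rw [smul_eq_mul]
    rw [mem_range, Nat.lt_succ_iff] at hi
    have he : n - i + i = n := by omega
    rw [← pow_add, he]
  · rw [zero_smul]

theorem whg_wittStructureRat {idx : Type*} (Φ : MvPolynomial idx ℚ) (u : idx → ℕ) (d : ℕ)
    (hΦ : Φ.IsWeightedHomogeneous u d) (n : ℕ) :
    (wittStructureRat p Φ n).IsWeightedHomogeneous (fun v => u v.1 * p ^ v.2) (d * p ^ n) := by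
  induction n using Nat.strong_induction_on with
  | _ n ih =>
    rw [wittStructureRat_rec]
    set w : idx × ℕ → ℕ := fun v => u v.1 * p ^ v.2 with hwdef
    have hA : IsWeightedHomogeneous w
        (bind₁ (fun b => rename (fun i => (b, i)) (wittPolynomial p ℚ n)) Φ) (d * p ^ n) := by
      apply whg_bind₁ hΦ w (p ^ n)
      intro b
      apply whg_rename
      exact whg_smul_weight (whg_wittPolynomial p n) (u b)
    have hS : IsWeightedHomogeneous w
        (∑ i ∈ range n, C ((p : ℚ) ^ i) * wittStructureRat p Φ i ^ p ^ (n - i)) (d * p ^ n) := by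
      apply IsWeightedHomogeneous.sum
      intro i hi
      have h1 := whg_pow (ih i (mem_range.mp hi)) (p ^ (n - i))
      have h2 := (isWeightedHomogeneous_C w ((p : ℚ) ^ i)).mul h1
      rw [zero_add] at h2
      have key : p ^ (n - i) * (d * p ^ i) = d * p ^ n := by
        rw [mem_range] at hi
        have he : n - i + i = n := by omega
        rw [mul_comm d, ← mul_assoc, ← pow_add, he, mul_comm]
      rwa [key] at h2
    have hsub := Submodule.sub_mem (weightedHomogeneousSubmodule ℚ w (d * p ^ n))
      ((mem_weightedHomogeneousSubmodule _ _ _ _).mpr hA)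
      ((mem_weightedHomogeneousSubmodule _ _ _ _).mpr hS)
    have h4 := (isWeightedHomogeneous_C w (1 / (p : ℚ) ^ n)).mul
      ((mem_weightedHomogeneousSubmodule _ _ _ _).mp hsub)
    rwa [zero_add] at h4

theorem whg_wittStructureInt {idx : Type*} (Φ : MvPolynomial idx ℤ) (u : idx → ℕ) (d : ℕ)
    (hΦ : (map (Int.castRingHom ℚ) Φ).IsWeightedHomogeneous u d) (n : ℕ) :
    (wittStructureInt p Φ n).IsWeightedHomogeneous (fun v => u v.1 * p ^ v.2) (d * p ^ n) := by
  have hQ := whg_wittStructureRat p _ u d hΦ n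
  intro e he
  apply hQ
  rw [← map_wittStructureInt, coeff_map]
  simpa using he

end WittWHG

section EvalMem

variable {R : Type*} [CommRing R]

theorem prod_pow_mem_ideal (I : Ideal R) {ι : Type*} (s : Finset ι) (f : ι → R) (a : ι → ℕ)
    (hf : ∀ i ∈ s, f i ∈ I ^ a i) : (∏ i ∈ s, f i) ∈ I ^ (∑ i ∈ s, a i) := by
  classical
  induction s using Finset.induction_on with
  | empty => simpa using Submodule.mem_top
  | insert _ _ hx ih =>
    rw [Finset.prod_insert hx, Finset.sum_insert hx, pow_add]
    exact Ideal.mul_mem_mul (hf _ (mem_insert_self _ _))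
      (ih fun i hi => hf i (mem_insert_of_mem hi))

theorem aeval_mem_ideal (I : Ideal R) {σ : Type*} (P : MvPolynomial σ ℤ) (w : σ → ℕ) {d : ℕ}
    (h : P.IsWeightedHomogeneous w d) (c : ℕ) (x : σ → R)
    (hx : ∀ v, x v ∈ I ^ (c * w v)) : aeval x P ∈ I ^ (c * d) := by
  rw [P.as_sum, map_sum]
  apply Submodule.sum_mem
  intro e he
  rw [aeval_monomial]
  apply Ideal.mul_mem_left
  have h1 : (∏ v ∈ e.support, x v ^ e v) ∈ I ^ (∑ v ∈ e.support, e v * (c * w v)) := by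
    apply prod_pow_mem_ideal
    intro v _
    have h2 := Ideal.pow_mem_pow (hx v) (e v)
    rwa [← pow_mul, mul_comm (c * w v)] at h2
  have key : ∑ v ∈ e.support, e v * (c * w v) = c * d := by
    have h3 := h (mem_support_iff.mp he)
    rw [Finsupp.weight_apply, Finsupp.sum] at h3
    rw [← h3, Finset.mul_sum]
    exact Finset.sum_congr rfl fun i _ => by
      simp only [smul_eq_mul]; ring
  rwa [key] at h1

end EvalMem

section WittKBasic

variable {p : ℕ} [hp : Fact p.Prime] {R : Type} [CommRing R]

theorem wittK_zero (J : Ideal R) (m : ℕ) : (0 : WittVector p R) ∈ wittK p R J m := by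
  intro i
  rw [WittVector.zero_coeff]
  exact Submodule.zero_mem _

theorem wittK_add {J : Ideal R} {m : ℕ} {x y : WittVector p R}
    (hx : x ∈ wittK p R J m) (hy : y ∈ wittK p R J m) : x + y ∈ wittK p R J m := by
  intro n
  rw [WittVector.add_coeff]
  have hwhg : (wittAdd p n).IsWeightedHomogeneous
      (fun v : Fin 2 × ℕ => (fun _ : Fin 2 => 1) v.1 * p ^ v.2) (1 * p ^ n) := by
    apply whg_wittStructureInt p _ (fun _ : Fin 2 => 1) 1 _ n
    have hmap : (map (Int.castRingHom ℚ)) (X 0 + X 1 : MvPolynomial (Fin 2) ℤ)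
        = X 0 + X 1 := by simp
    rw [hmap]
    exact (isWeightedHomogeneous_X ℚ _ 0).add (isWeightedHomogeneous_X ℚ _ 1)
  have hmem := aeval_mem_ideal J (wittAdd p n) _ hwhg (p ^ m)
    (Function.uncurry ![x.coeff, y.coeff]) ?_
  · have hexp : p ^ m * (1 * p ^ n) = p ^ (n + m) := by
      rw [one_mul, ← pow_add]; ring_nf
    rw [hexp] at hmem
    exact hmem
  · rintro ⟨b, i⟩
    show Function.uncurry ![x.coeff, y.coeff] (b, i) ∈ J ^ (p ^ m * (1 * p ^ i))
    have hexp : p ^ m * (1 * p ^ i) = p ^ (i + m) := by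
      rw [one_mul, ← pow_add]; ring_nf
    rw [hexp]
    fin_cases b
    · simpa using hx i
    · simpa using hy i

theorem wittK_mul {J : Ideal R} {m : ℕ} (a : WittVector p R) {x : WittVector p R}
    (hx : x ∈ wittK p R J m) : a * x ∈ wittK p R J m := by
  intro n
  rw [WittVector.mul_coeff]
  set u : Fin 2 → ℕ := fun b => if b = 1 then 1 else 0 with hu
  have hwhg : (wittMul p n).IsWeightedHomogeneous
      (fun v : Fin 2 × ℕ => u v.1 * p ^ v.2) (1 * p ^ n) := by
    apply whg_wittStructureInt p _ u 1 _ n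
    have hmap : (map (Int.castRingHom ℚ)) (X 0 * X 1 : MvPolynomial (Fin 2) ℤ)
        = X 0 * X 1 := by simp
    rw [hmap]
    have h01 := (isWeightedHomogeneous_X ℚ u 0).mul (isWeightedHomogeneous_X ℚ u 1)
    have : u 0 + u 1 = 1 := by simp [hu]
    rwa [this] at h01
  have hmem := aeval_mem_ideal J (wittMul p n) _ hwhg (p ^ m)
    (Function.uncurry ![a.coeff, x.coeff]) ?_
  · have hexp : p ^ m * (1 * p ^ n) = p ^ (n + m) := by
      rw [one_mul, ← pow_add]; ring_nf
    rw [hexp] at hmem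
    exact hmem
  · rintro ⟨b, i⟩
    show Function.uncurry ![a.coeff, x.coeff] (b, i) ∈ J ^ (p ^ m * (u b * p ^ i))
    fin_cases b
    · show Function.uncurry ![a.coeff, x.coeff] ((0 : Fin 2), i) ∈ J ^ (p ^ m * (u 0 * p ^ i))
      have hexp : p ^ m * (u 0 * p ^ i) = 0 := by simp [hu]
      rw [hexp, pow_zero, Ideal.one_eq_top]
      exact Submodule.mem_top
    · show Function.uncurry ![a.coeff, x.coeff] ((1 : Fin 2), i) ∈ J ^ (p ^ m * (u 1 * p ^ i))
      have hexp : p ^ m * (u 1 * p ^ i) = p ^ (i + m) := by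
        have h1 : u 1 = 1 := by simp [hu]
        rw [h1, one_mul, ← pow_add, add_comm]
      rw [hexp]
      simpa using hx i

theorem wittK_sub {J : Ideal R} {m : ℕ} {x y : WittVector p R}
    (hx : x ∈ wittK p R J m) (hy : y ∈ wittK p R J m) : x - y ∈ wittK p R J m := by
  rw [sub_eq_add_neg, neg_eq_neg_one_mul]
  exact wittK_add hx (wittK_mul _ hy)

theorem wittK_sum {J : Ideal R} {m : ℕ} {ι : Type*} (s : Finset ι) (f : ι → WittVector p R)
    (hf : ∀ i ∈ s, f i ∈ wittK p R J m) : (∑ i ∈ s, f i) ∈ wittK p R J m := by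
  classical
  induction s using Finset.induction_on with
  | empty => simpa using wittK_zero J m
  | insert _ _ hx ih =>
    rw [Finset.sum_insert hx]
    exact wittK_add (hf _ (mem_insert_self _ _)) (ih fun i hi => hf i (mem_insert_of_mem hi))

theorem wittK_mono {J : Ideal R} {m : ℕ} {x : WittVector p R}
    (hx : x ∈ wittK p R J (m + 1)) : x ∈ wittK p R J m := by
  intro i
  refine Ideal.pow_le_pow_right ?_ (hx i)
  exact Nat.pow_le_pow_right hp.out.pos (by omega)

end WittKBasic

section CharPPart

variable {p : ℕ} [hp : Fact p.Prime] {R : Type} [CommRing R] [CharP R p] [PerfectRing R p]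

theorem frob_teich (a : R) :
    WittVector.frobenius (WittVector.teichmuller p a) = WittVector.teichmuller p (a ^ p) := by
  ext n
  rw [WittVector.coeff_frobenius_charP]
  cases n with
  | zero => rw [WittVector.teichmuller_coeff_zero, WittVector.teichmuller_coeff_zero]
  | succ n =>
    rw [WittVector.teichmuller_coeff_pos p _ _ n.succ_pos,
      WittVector.teichmuller_coeff_pos p _ _ n.succ_pos, zero_pow hp.out.ne_zero]

theorem versch_eq_p_mul (c : WittVector p R) :
    WittVector.verschiebung c = (p : WittVector p R) * (WittVector.frobeniusEquiv p R).symm c := by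
  have h1 := WittVector.verschiebung_frobenius ((WittVector.frobeniusEquiv p R).symm c)
  rw [← WittVector.frobeniusEquiv_apply, RingEquiv.apply_symm_apply] at h1
  rw [h1, mul_comm]

theorem versch_pow (u : WittVector p R) :
    (WittVector.verschiebung u) ^ p
      = (p : WittVector p R) ^ (p - 1) * WittVector.verschiebung (u ^ p) := by
  have hp1 : p - 1 + 1 = p := Nat.succ_pred_eq_of_pos hp.out.pos
  rw [versch_eq_p_mul u, mul_pow, ← map_pow, versch_eq_p_mul (u ^ p), ← mul_assoc]
  congr 1
  rw [← pow_succ, hp1]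

theorem p_pow_mul_coeff (k : ℕ) (z : WittVector p R) :
    ∀ j < k, ((p : WittVector p R) ^ k * z).coeff j = 0 := by
  induction k generalizing z with
  | zero => intro j hj; omega
  | succ k ih =>
    intro j hj
    have hz : (p : WittVector p R) ^ (k + 1) * z = ((p : WittVector p R) ^ k * z) * p := by ring
    rw [hz]
    cases j with
    | zero => exact WittVector.mul_charP_coeff_zero _
    | succ j =>
      rw [WittVector.mul_charP_coeff_succ, ih z j (by omega), zero_pow hp.out.ne_zero]

end CharPPart

/-- For a perfect ring `R` of characteristic `p` and an ideal `J` with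
`J^(p^r) ⊆ φ(J)` for some `r ≥ 1`: the set `K_m` is an ideal of `W(R)`, it is a
`δ`-ideal (i.e. `F(x) - x^p ∈ p·K_m` for `x ∈ K_m`), and it is `p`-adically closed. -/
theorem stmt_6 (p : ℕ) [Fact p.Prime] (R : Type) [CommRing R] [CharP R p]
    [PerfectRing R p] (J : Ideal R) (r : ℕ) (hr : 1 ≤ r)
    (hJ : J ^ (p ^ r) ≤ Ideal.map (frobenius R p) J) (m : ℕ) :
    ((0 : WittVector p R) ∈ wittK p R J m ∧
      (∀ x ∈ wittK p R J m, ∀ y ∈ wittK p R J m, x + y ∈ wittK p R J m) ∧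
      (∀ a : WittVector p R, ∀ x ∈ wittK p R J m, a * x ∈ wittK p R J m)) ∧
    (∀ x ∈ wittK p R J m, ∃ y ∈ wittK p R J m,
      WittVector.frobenius x - x ^ p = (p : WittVector p R) * y) ∧
    (∀ x : WittVector p R,
      (∀ k : ℕ, ∃ y ∈ wittK p R J m, ∃ z : WittVector p R,
        x = y + (p : WittVector p R) ^ k * z) →
      x ∈ wittK p R J m) := by
  have hp : Fact p.Prime := ‹_›
  have hp2 : 2 ≤ p := hp.out.two_le
  refine ⟨⟨wittK_zero J m, fun x hx y hy => wittK_add hx hy, fun a x hx => wittK_mul a hx⟩,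
    ?_, ?_⟩
  · -- part (ii)
    intro x hx
    set a := x.coeff 0 with ha
    set T := WittVector.teichmuller p a with hT
    set r' := x - T with hr'
    have hxrT : x = r' + T := by rw [hr']; ring
    have hr0 : r'.coeff 0 = 0 := by
      have h2 : x.coeff 0 = r'.coeff 0 + T.coeff 0 := by
        conv_lhs => rw [hxrT]
        rw [WittVector.add_coeff_zero]
      rw [hT, WittVector.teichmuller_coeff_zero, ← ha] at h2
      exact right_eq_add.mp h2
    set t := WittVector.mk p (fun i => r'.coeff (i + 1)) with ht
    have hVt : WittVector.verschiebung t = r' := by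
      ext n
      cases n with
      | zero => rw [WittVector.verschiebung_coeff_zero, hr0]
      | succ n =>
        rw [WittVector.verschiebung_coeff_succ, ht, WittVector.coeff_mk]
    have hxTV : x = T + WittVector.verschiebung t := by rw [hVt, hr']; ring
    have hTmem : T ∈ wittK p R J m := by
      intro i
      cases i with
      | zero =>
        rw [hT, WittVector.teichmuller_coeff_zero]
        exact hx 0
      | succ i =>
        rw [hT, WittVector.teichmuller_coeff_pos p _ _ i.succ_pos]
        exact Submodule.zero_mem _
    have hrmem : r' ∈ wittK p R J m := by
      rw [hr']; exact wittK_sub hx hTmem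
    have htmem : t ∈ wittK p R J (m + 1) := by
      intro i
      rw [ht, WittVector.coeff_mk]
      have he : i + (m + 1) = (i + 1) + m := by omega
      rw [he]
      exact hrmem (i + 1)
    have htm : t ∈ wittK p R J m := wittK_mono htmem
    have hVtp : WittVector.verschiebung (t ^ p) ∈ wittK p R J m := by
      have htpm : t ^ p ∈ wittK p R J (m + 1) := by
        have hpow : t ^ p = t ^ (p - 1) * t := by
          rw [← pow_succ]
          congr 1
          omega
        rw [hpow]
        exact wittK_mul _ htmem
      intro i
      cases i with
      | zero =>
        rw [WittVector.verschiebung_coeff_zero]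
        exact Submodule.zero_mem _
      | succ i =>
        rw [WittVector.verschiebung_coeff_succ]
        have he : (i + 1) + m = i + (m + 1) := by omega
        rw [he]
        exact htpm i
    set Vt := WittVector.verschiebung t with hVtdef
    set E := ∑ k ∈ Finset.Ioo 0 p,
      ((p.choose k / p : ℕ) : WittVector p R) * (T ^ k * Vt ^ (p - k)) with hE
    have hEmem : E ∈ wittK p R J m := by
      rw [hE]
      apply wittK_sum
      intro k hk
      rw [Finset.mem_Ioo] at hk
      have hTk : T ^ k = T ^ (k - 1) * T := by
        rw [← pow_succ]
        congr 1
        omega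
      have hterm : ((p.choose k / p : ℕ) : WittVector p R) * (T ^ k * Vt ^ (p - k))
          = (((p.choose k / p : ℕ) : WittVector p R) * (T ^ (k - 1) * Vt ^ (p - k))) * T := by
        rw [hTk]; ring
      rw [hterm]
      exact wittK_mul _ hTmem
    have hbin : (T + Vt) ^ p
        = WittVector.teichmuller p (a ^ p)
          + (p : WittVector p R) ^ (p - 1) * WittVector.verschiebung (t ^ p)
          + (p : WittVector p R) * E := by
      rw [add_pow, Finset.sum_range_succ]
      have hrange : Finset.range p = insert 0 (Finset.Ioo 0 p) := by
        rw [Finset.Ioo_insert_left hp.out.pos, ← Finset.range_eq_Ico]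
      rw [hrange, Finset.sum_insert Finset.left_notMem_Ioo]
      have hfp : T ^ p * Vt ^ (p - p) * (p.choose p : WittVector p R)
          = WittVector.teichmuller p (a ^ p) := by
        rw [Nat.sub_self, pow_zero, Nat.choose_self, Nat.cast_one, mul_one, mul_one, hT,
          ← map_pow]
      have hf0 : T ^ 0 * Vt ^ (p - 0) * (p.choose 0 : WittVector p R)
          = (p : WittVector p R) ^ (p - 1) * WittVector.verschiebung (t ^ p) := by
        rw [pow_zero, one_mul, Nat.choose_zero_right, Nat.cast_one, mul_one, Nat.sub_zero,
          hVtdef, versch_pow]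
      have hmid : ∑ k ∈ Finset.Ioo 0 p, T ^ k * Vt ^ (p - k) * (p.choose k : WittVector p R)
          = (p : WittVector p R) * E := by
        rw [hE, Finset.mul_sum]
        apply Finset.sum_congr rfl
        intro k hk
        rw [Finset.mem_Ioo] at hk
        have hdvd : p ∣ p.choose k := hp.out.dvd_choose_self (by omega) hk.2
        have hc : (p : WittVector p R) * ((p.choose k / p : ℕ) : WittVector p R)
            = (p.choose k : WittVector p R) := by
          rw [← Nat.cast_mul, Nat.mul_div_cancel' hdvd]
        rw [← mul_assoc, hc]
        ring
      rw [hfp, hf0, hmid]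
      ring
    refine ⟨t - (p : WittVector p R) ^ (p - 2) * WittVector.verschiebung (t ^ p) - E,
      wittK_sub (wittK_sub htm (wittK_mul _ hVtp)) hEmem, ?_⟩
    have hF : WittVector.frobenius x
        = WittVector.teichmuller p (a ^ p) + t * (p : WittVector p R) := by
      rw [hxTV, map_add, hT, frob_teich, hVtdef, WittVector.frobenius_verschiebung]
    have hXp : x ^ p = WittVector.teichmuller p (a ^ p)
        + (p : WittVector p R) ^ (p - 1) * WittVector.verschiebung (t ^ p)
        + (p : WittVector p R) * E := by
      rw [hxTV, hbin]
    rw [hF, hXp]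
    have h21 : (p : WittVector p R) ^ (p - 1)
        = (p : WittVector p R) * (p : WittVector p R) ^ (p - 2) := by
      have he : p - 1 = (p - 2) + 1 := by omega
      rw [he, pow_succ]
      ring
    rw [h21]
    ring
  · -- part (iii)
    intro x h
    intro i
    obtain ⟨y, hy, z, hxyz⟩ := h (i + 1)
    have hcoeff : x.coeff i = y.coeff i := by
      have h0 : WittVector.truncate (i + 1) ((p : WittVector p R) ^ (i + 1) * z) = 0 := by
        apply TruncatedWittVector.ext
        intro j
        rw [WittVector.coeff_truncate, TruncatedWittVector.coeff_zero]
        exact p_pow_mul_coeff (i + 1) z j j.2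
      have h1 := congrArg (WittVector.truncate (i + 1)) hxyz
      rw [map_add, h0, add_zero] at h1
      have h2 := congrArg (TruncatedWittVector.coeff ⟨i, Nat.lt_succ_self i⟩) h1
      simpa [WittVector.coeff_truncate] using h2
    rw [hcoeff]
    exact hy i
end

section
/- Let p be a prime and A a commutative ring in which p is a non-zero-divisor, equipped with a ring endomorphism φ : A → A such that φ(a) − a^p ∈ pA for every a ∈ A (a Frobenius lift). Suppose y, y' ∈ A satisfy y − y' ∈ pA, and suppose y^p = p·u and y'^p = p·u' for elements u, u' ∈ A. Then u − u' ∈ pA, and u^p ∈ pA. Consequently, writing R = A/pA, every x ∈ R with x^p = 0 has a well-defined element γ(x) ∈ R satisfying γ(x)^p = 0, namely the image in R of u for any lift y ∈ A of x with y^p = p·u. -/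
/-!
Since `y ≡ y' mod p`, we get `y ^ p ≡ y' ^ p mod p²`, i.e. `p u ≡ p u' mod p²`, and
cancelling the non-zero-divisor `p` gives `u ≡ u' mod p`. For `u ^ p`, apply the Frobenius lift to
`y ^ p = p u`: since `φ y ≡ y ^ p ≡ 0 mod p`, we get `p φ(u) = φ(y) ^ p ∈ p ^ p A`, so
`u ^ p ≡ φ(u) ≡ 0 mod p` after cancelling one `p`.
-/

variable {A : Type*} [CommRing A] {p : ℕ}

lemma dvd_sub_of_pow_eq_natCast_mul (hp : (p : A) ∈ nonZeroDivisors A) {y y' u u' : A}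
    (hyy' : (p : A) ∣ y - y') (hu : y ^ p = p * u) (hu' : y' ^ p = p * u') :
    (p : A) ∣ u - u' := by
  obtain ⟨c, hc⟩ : (p : A) ^ 2 ∣ y ^ p - y' ^ p := by
    simpa using dvd_sub_pow_of_dvd_sub hyy' 1
  refine ⟨c, (mul_cancel_left_mem_nonZeroDivisors hp).mp ?_⟩
  linear_combination hc - hu + hu'

lemma dvd_map_of_pow_eq_natCast_mul (hp₂ : 2 ≤ p) (hp : (p : A) ∈ nonZeroDivisors A)
    (φ : A →+* A) (hφ : ∀ a, (p : A) ∣ φ a - a ^ p) {y u : A} (hu : y ^ p = p * u) :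
    (p : A) ∣ φ u := by
  obtain ⟨a, ha⟩ := hφ y
  have hφy : φ y = p * (u + a) := by linear_combination ha + hu
  have hφu : (p : A) * φ u = p * (p ^ (p - 1) * (u + a) ^ p) := by
    calc (p : A) * φ u = φ (y ^ p) := by rw [hu, map_mul, map_natCast]
      _ = p ^ (p - 1 + 1) * (u + a) ^ p := by
        rw [map_pow, hφy, mul_pow, Nat.sub_add_cancel (by omega)]
      _ = p * (p ^ (p - 1) * (u + a) ^ p) := by ring
  rw [(mul_cancel_left_mem_nonZeroDivisors hp).mp hφu]
  exact (dvd_pow_self _ (by omega)).mul_right _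

lemma dvd_pow_of_pow_eq_natCast_mul (hp₂ : 2 ≤ p) (hp : (p : A) ∈ nonZeroDivisors A)
    (φ : A →+* A) (hφ : ∀ a, (p : A) ∣ φ a - a ^ p) {y u : A} (hu : y ^ p = p * u) :
    (p : A) ∣ u ^ p := by
  have h := (dvd_map_of_pow_eq_natCast_mul hp₂ hp φ hφ hu).sub (hφ u)
  rwa [sub_sub_cancel] at h

/-- Over a ring `A` with `p` a non-zero-divisor and a Frobenius lift `φ`: if `y ≡ y' mod p`
and `y^p = p·u`, `y'^p = p·u'`, then `u ≡ u' mod p` and `u^p ∈ pA`. Consequently every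
`x ∈ A/pA` with `x^p = 0` has a well-defined `γ(x) ∈ A/pA` with `γ(x)^p = 0`, namely the
image of `u` for any lift `y` of `x` with `y^p = p·u`. -/
theorem stmt_7 (p : ℕ) (hp : p.Prime) (A : Type) [CommRing A]
    (hpnzd : (p : A) ∈ nonZeroDivisors A)
    (φ : A →+* A) (hφ : ∀ a : A, φ a - a ^ p ∈ Ideal.span {(p : A)}) :
    (∀ y y' u u' : A, y - y' ∈ Ideal.span {(p : A)} →
      y ^ p = (p : A) * u → y' ^ p = (p : A) * u' →
      u - u' ∈ Ideal.span {(p : A)} ∧ u ^ p ∈ Ideal.span {(p : A)}) ∧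
    (∀ x : A ⧸ Ideal.span {(p : A)}, x ^ p = 0 →
      ∃ γx : A ⧸ Ideal.span {(p : A)}, γx ^ p = 0 ∧
        ∀ y u : A, Ideal.Quotient.mk (Ideal.span {(p : A)}) y = x →
          y ^ p = (p : A) * u →
          Ideal.Quotient.mk (Ideal.span {(p : A)}) u = γx) := by
  simp only [Ideal.mem_span_singleton] at hφ ⊢
  have hu_pow {y u : A} (hu : y ^ p = p * u) : (p : A) ∣ u ^ p :=
    dvd_pow_of_pow_eq_natCast_mul hp.two_le hpnzd φ hφ hu
  refine ⟨fun y y' u u' hyy' hu hu' ↦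
    ⟨dvd_sub_of_pow_eq_natCast_mul hpnzd hyy' hu hu', hu_pow hu⟩, fun x hx ↦ ?_⟩
  obtain ⟨y, rfl⟩ := Ideal.Quotient.mk_surjective x
  obtain ⟨u, hu⟩ : (p : A) ∣ y ^ p := by
    rw [← Ideal.mem_span_singleton, ← Ideal.Quotient.eq_zero_iff_mem, map_pow, hx]
  refine ⟨Ideal.Quotient.mk _ u, ?_, fun y' u' hy' hu' ↦ ?_⟩
  · rw [← map_pow, Ideal.Quotient.eq_zero_iff_mem, Ideal.mem_span_singleton]
    exact hu_pow hu
  · rw [Ideal.Quotient.eq, Ideal.mem_span_singleton] at hy' ⊢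
    exact dvd_sub_of_pow_eq_natCast_mul hpnzd hy' hu' hu
end

section
/- Let p be a prime, n ≥ 1 an integer, and A a commutative ring in which p is a non-zero-divisor. Let d ∈ A be an element whose image in A/pA is a non-zero-divisor, and let φ : A → A be a ring homomorphism. Let N be an A-module with p^n·N = 0 fitting in a short exact sequence 0 → Q' → Q → N → 0 of A-modules with Q' and Q finitely generated projective, and write φ*N = A ⊗_{A,φ} N. Suppose F : φ*N → N and V : N → φ*N are A-linear maps such that F∘V = d·id_N and V∘F = d·id_{φ*N}. Then F is injective, d·N ⊆ F(φ*N) (i.e. the cokernel of F is killed by d), and V is the unique A-linear map N → φ*N with F∘V = d·id_N. -/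
open TensorProduct LinearMap Finsupp

/-- wrapper type to carry the φ-twisted algebra structure -/
def Tw (A : Type) : Type := A

instance {A : Type} [CommRing A] : CommRing (Tw A) := inferInstanceAs (CommRing A)

/-- wrapper to carry an alternative module structure -/
def UA (M : Type) : Type := M

instance {M : Type} [AddCommGroup M] : AddCommGroup (UA M) := inferInstanceAs (AddCommGroup M)

/-- wrapper to carry an alternative module structure -/
def TwM (M : Type) : Type := M

instance {M : Type} [AddCommGroup M] : AddCommGroup (TwM M) := inferInstanceAs (AddCommGroup M)

def toUA {M : Type} (x : M) : UA M := x
def ofUA {M : Type} (x : UA M) : M := x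
def toTwM {M : Type} (x : M) : TwM M := x
def ofTwM {M : Type} (x : TwM M) : M := x

lemma ofUA_add {M : Type} [AddCommGroup M] (a b : UA M) : ofUA (a + b) = ofUA a + ofUA b := rfl
lemma ofTwM_add {M : Type} [AddCommGroup M] (a b : TwM M) : ofTwM (a + b) = ofTwM a + ofTwM b := rfl

lemma aux_proj_smul_inj {S M : Type*} [CommRing S] [AddCommGroup M] [Module S M]
    [Module.Projective S M] (a : S) (ha : ∀ b : S, a * b = 0 → b = 0)
    {m : M} (hm : a • m = 0) : m = 0 := by
  obtain ⟨s, hs⟩ := Module.projective_def.mp ‹Module.Projective S M›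
  have h1 : a • s m = 0 := by rw [← map_smul, hm, map_zero]
  have h2 : s m = 0 := by
    ext i
    have := DFunLike.congr_fun h1 i
    simp only [Finsupp.smul_apply, smul_eq_mul, Finsupp.coe_zero, Pi.zero_apply] at this ⊢
    exact ha _ this
  have := hs m
  rw [h2, map_zero] at this
  exact this.symm

lemma aux_proj_div {S M : Type*} [CommRing S] [AddCommGroup M] [Module S M]
    [Module.Projective S M] (q e : S) (hq : ∀ b : S, q * b = 0 → b = 0)
    (he : ∀ a : S, (∃ b, e * a = q * b) → ∃ c, a = q * c)
    {m : M} (hm : ∃ m', e • m = q • m') : ∃ m'', m = q • m'' := by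
  obtain ⟨s, hs⟩ := Module.projective_def.mp ‹Module.Projective S M›
  obtain ⟨m', hm⟩ := hm
  have hsm : ∀ i, ∃ c, (s m) i = q * c := by
    intro i
    apply he
    refine ⟨(s m') i, ?_⟩
    have := congrArg s hm
    rw [map_smul, map_smul] at this
    have := DFunLike.congr_fun this i
    simpa only [Finsupp.smul_apply, smul_eq_mul] using this
  choose c hc using hsm
  have hc0 : ∀ i, (s m) i = 0 → c i = 0 := by
    intro i hi
    apply hq
    rw [← hc i, hi]
  set cf : M →₀ S := Finsupp.onFinset (s m).support c
    (fun i hi => by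
      rw [Finsupp.mem_support_iff]
      intro h0
      exact hi (hc0 i h0)) with hcf
  have hsmc : s m = q • cf := by
    ext i
    simp only [Finsupp.smul_apply, smul_eq_mul, hcf, Finsupp.onFinset_apply]
    exact hc i
  refine ⟨Finsupp.linearCombination S id cf, ?_⟩
  rw [← hs m, hsmc, map_smul]

lemma aux_ker_step {S P' P M : Type*} [CommRing S] [AddCommGroup P'] [Module S P']
    [AddCommGroup P] [Module S P] [AddCommGroup M] [Module S M]
    (ι : P' →ₗ[S] P) (π : P →ₗ[S] M) (hι : Function.Injective ι)
    (hπ : Function.Surjective π) (hex : ∀ z : P, π z = 0 ↔ ∃ a, ι a = z)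
    (q e : S)
    (hqP : ∀ z : P, q • z = 0 → z = 0)
    (heP' : ∀ a : P', (∃ b, e • a = q • b) → ∃ c, a = q • c)
    {x : M} (hex0 : e • x = 0) (hqx : q • x = 0) : x = 0 := by
  obtain ⟨z, rfl⟩ := hπ x
  obtain ⟨a, ha⟩ := (hex (e • z)).mp (by rw [map_smul, hex0])
  obtain ⟨b, hb⟩ := (hex (q • z)).mp (by rw [map_smul, hqx])
  have hab : e • b = q • a := by
    apply hι
    rw [map_smul, map_smul, ha, hb, smul_comm]
  obtain ⟨c, hc⟩ := heP' b ⟨a, hab⟩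
  have hz0 : q • (z - ι c) = 0 := by
    rw [smul_sub, ← map_smul, ← hc, hb, sub_self]
  have hz : z = ι c := by
    have := hqP _ hz0
    rwa [sub_eq_zero] at this
  rw [hz]
  exact (hex (ι c)).mpr ⟨c, rfl⟩

lemma aux_ker_pow {S P' P M : Type*} [CommRing S] [AddCommGroup P'] [Module S P']
    [AddCommGroup P] [Module S P] [AddCommGroup M] [Module S M]
    (ι : P' →ₗ[S] P) (π : P →ₗ[S] M) (hι : Function.Injective ι)
    (hπ : Function.Surjective π) (hex : ∀ z : P, π z = 0 ↔ ∃ a, ι a = z)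
    (q e : S)
    (hqP : ∀ z : P, q • z = 0 → z = 0)
    (heP' : ∀ a : P', (∃ b, e • a = q • b) → ∃ c, a = q • c)
    (k : ℕ) :
    ∀ x : M, e • x = 0 → q ^ k • x = 0 → x = 0 := by
  induction k with
  | zero => intro x _ hx; rwa [pow_zero, one_smul] at hx
  | succ k ih =>
    intro x hex0 hqx
    have h1 : q ^ k • x = 0 := by
      apply aux_ker_step ι π hι hπ hex q e hqP heP'
      · rw [smul_comm, hex0, smul_zero]
      · rw [smul_smul, ← pow_succ', hqx]
    exact ih x hex0 h1

/-- Breuil–Kisin windows vs generalized Breuil windows, forward direction: given a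
`p^n`-torsion module `N` of projective dimension one over `A` (with `p` a non-zero-divisor
in `A` and `d` a non-zero-divisor modulo `p`), the base change `φ*N` of `N` along a ring
endomorphism `φ` (characterized by its universal property among `φ`-semilinear maps out of
`N`), and `A`-linear maps `F : φ*N → N`, `V : N → φ*N` with `F∘V = d·id` and `V∘F = d·id`,
then `F` is injective, `d·N ⊆ F(φ*N)`, and `V` is the unique map with `F∘V = d·id`. -/
theorem stmt_8 (p : ℕ) (hp : p.Prime) (n : ℕ) (hn : 1 ≤ n)
    (A : Type) [CommRing A] (hpnzd : (p : A) ∈ nonZeroDivisors A)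
    (d : A)
    (hd : Ideal.Quotient.mk (Ideal.span {(p : A)}) d ∈
      nonZeroDivisors (A ⧸ Ideal.span {(p : A)}))
    (φ : A →+* A)
    (N : Type) [AddCommGroup N] [Module A N]
    (htors : ∀ x : N, (p : A) ^ n • x = 0)
    (Q' Q : Type) [AddCommGroup Q'] [Module A Q'] [AddCommGroup Q] [Module A Q]
    [Module.Finite A Q'] [Module.Projective A Q']
    [Module.Finite A Q] [Module.Projective A Q]
    (ι : Q' →ₗ[A] Q) (π : Q →ₗ[A] N)
    (hι : Function.Injective ι) (hπ : Function.Surjective π)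
    (hexact : LinearMap.range ι = LinearMap.ker π)
    (Nφ : Type) [AddCommGroup Nφ] [Module A Nφ]
    (j : N →ₛₗ[φ] Nφ)
    (huniv : ∀ (P : Type) [AddCommGroup P] [Module A P] (f : N →ₛₗ[φ] P),
      ∃! g : Nφ →ₗ[A] P, ∀ x : N, g (j x) = f x)
    (F : Nφ →ₗ[A] N) (V : N →ₗ[A] Nφ)
    (hFV : ∀ x : N, F (V x) = d • x)
    (hVF : ∀ y : Nφ, V (F y) = d • y) :
    Function.Injective F ∧
    (∀ x : N, ∃ y : Nφ, F y = d • x) ∧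
    (∀ V' : N →ₗ[A] Nφ, (∀ x : N, F (V' x) = d • x) → V' = V) := by
  classical
  -- arithmetic preliminaries
  have hpA : ∀ b : A, (p : A) * b = 0 → b = 0 := by
    intro b hb
    exact hpnzd.2 b (by rw [mul_comm]; exact hb)
  have hpApow : ∀ (k : ℕ) (b : A), (p : A) ^ k * b = 0 → b = 0 := by
    intro k
    induction k with
    | zero => intro b hb; simpa using hb
    | succ k ih =>
      intro b hb
      apply hpA
      apply ih
      rw [← mul_assoc, ← pow_succ]
      exact hb
  have hdA : ∀ a : A, (∃ b, d * a = (p : A) * b) → ∃ c, a = (p : A) * c := by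
    rintro a ⟨b, hb⟩
    have h1 : (Ideal.Quotient.mk (Ideal.span {(p : A)}) a) *
        (Ideal.Quotient.mk (Ideal.span {(p : A)}) d) = 0 := by
      rw [← map_mul, Ideal.Quotient.eq_zero_iff_mem, mul_comm,
        Ideal.mem_span_singleton']
      exact ⟨b, by rw [mul_comm]; exact hb.symm⟩
    have h2 := hd.2 _ h1
    rw [Ideal.Quotient.eq_zero_iff_mem, Ideal.mem_span_singleton'] at h2
    obtain ⟨c, hc⟩ := h2
    exact ⟨c, by rw [← hc, mul_comm]⟩
  -- the twisted algebra structure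
  letI : Algebra A (Tw A) := RingHom.toAlgebra (show A →+* Tw A from φ)
  have halg : ∀ c : A, (algebraMap A (Tw A)) c = φ c := fun c => rfl
  -- base change of the presentation
  set ιT : Tw A ⊗[A] Q' →ₗ[Tw A] Tw A ⊗[A] Q := ι.baseChange (Tw A) with hιT
  set πT : Tw A ⊗[A] Q →ₗ[Tw A] Tw A ⊗[A] N := π.baseChange (Tw A) with hπT
  have hπT_surj : Function.Surjective πT := by
    rw [hπT, LinearMap.baseChange_eq_ltensor]
    exact LinearMap.lTensor_surjective (Tw A) hπ
  have hexact' : Function.Exact ι π := LinearMap.exact_iff.mpr hexact.symm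
  have hexT : ∀ z : Tw A ⊗[A] Q, πT z = 0 ↔ ∃ w, ιT w = z := by
    have hEx : Function.Exact (ι.lTensor (Tw A)) (π.lTensor (Tw A)) :=
      lTensor_exact (Tw A) hexact' hπ
    intro z
    constructor
    · intro hz
      have := (hEx z).mp (by rw [← LinearMap.baseChange_eq_ltensor]; exact hz)
      obtain ⟨w, hw⟩ := this
      exact ⟨w, by rw [hιT, LinearMap.baseChange_eq_ltensor]; exact hw⟩
    · rintro ⟨w, rfl⟩
      have : π.lTensor (Tw A) ((ι.lTensor (Tw A)) w) = 0 := hEx.apply_apply_eq_zero w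
      rw [hπT, hιT, LinearMap.baseChange_eq_ltensor, LinearMap.baseChange_eq_ltensor]
      exact this
  -- the retraction h with ι ∘ h = p^n • id
  have hrange : ∀ z : Q, ((p : A) ^ n • LinearMap.id : Q →ₗ[A] Q) z ∈ LinearMap.range ι := by
    intro z
    rw [hexact]
    simp only [LinearMap.mem_ker, LinearMap.smul_apply, LinearMap.id_apply, map_smul]
    exact htors (π z)
  obtain ⟨h, hh⟩ := Module.projective_lifting_property ι.rangeRestrict
    (LinearMap.codRestrict (LinearMap.range ι) ((p : A) ^ n • LinearMap.id) hrange)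
    (LinearMap.surjective_rangeRestrict ι)
  have hhι : ∀ z : Q, ι (h z) = (p : A) ^ n • z := by
    intro z
    have := LinearMap.congr_fun hh z
    have := congrArg Subtype.val this
    simpa using this
  have hhι' : ∀ w : Q', h (ι w) = (p : A) ^ n • w := by
    intro w
    apply hι
    rw [hhι, map_smul]
  -- base change of h, and injectivity of ιT
  set hT : Tw A ⊗[A] Q →ₗ[Tw A] Tw A ⊗[A] Q' := h.baseChange (Tw A) with hhT
  have hkey : ∀ z : Tw A ⊗[A] Q', hT (ιT z) = ((p : Tw A) ^ n) • z := by
    intro z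
    induction z using TensorProduct.induction_on with
    | zero => simp
    | tmul a x =>
      rw [hιT, hhT, LinearMap.baseChange_tmul, LinearMap.baseChange_tmul, hhι',
        TensorProduct.tmul_smul, TensorProduct.smul_tmul', TensorProduct.smul_tmul']
      congr 1
      rw [Algebra.smul_def, halg, smul_eq_mul, map_pow, map_natCast]
      rfl
    | add z w hz hw => rw [map_add, map_add, hz, hw, smul_add]
  have hpT : ∀ b : Tw A, (p : Tw A) * b = 0 → b = 0 := hpA
  have hpTpow : ∀ b : Tw A, (p : Tw A) ^ n * b = 0 → b = 0 := hpApow n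
  haveI hProjQ' : Module.Projective (Tw A) (Tw A ⊗[A] Q') :=
    Module.Projective.tensorProduct
  haveI hProjQ : Module.Projective (Tw A) (Tw A ⊗[A] Q) :=
    Module.Projective.tensorProduct
  have hιT_inj : Function.Injective ιT := by
    intro z w hzw
    rw [← sub_eq_zero]
    apply aux_proj_smul_inj ((p : Tw A) ^ n) hpTpow
    rw [← hkey, map_sub, hzw, sub_self, map_zero]
  -- d is injective on p-power-torsion elements of Tw A ⊗ N
  have hdT : ∀ a : Tw A, (∃ b, (show Tw A from d) * a = (p : Tw A) * b) →
      ∃ c, a = (p : Tw A) * c := hdA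
  have hNT : ∀ z : Tw A ⊗[A] N, (show Tw A from d) • z = 0 →
      (p : Tw A) ^ n • z = 0 → z = 0 := by
    intro z h1 h2
    apply aux_ker_pow ιT πT hιT_inj hπT_surj hexT (p : Tw A) (show Tw A from d)
      (fun w hw => aux_proj_smul_inj (p : Tw A) hpT hw)
      (fun a ha => aux_proj_div (p : Tw A) (show Tw A from d) hpT hdT ha)
      n z h1 h2
  -- Nφ is generated by the image of j
  have hspan : Submodule.span A (Set.range j) = ⊤ := by
    set Sp := Submodule.span A (Set.range j) with hSp
    obtain ⟨g, hg, hgu⟩ := huniv (Nφ ⧸ Sp) (Sp.mkQ.comp j)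
    have h1 : (Sp.mkQ : Nφ →ₗ[A] Nφ ⧸ Sp) = g :=
      hgu _ (fun x => rfl)
    have h2 : (0 : Nφ →ₗ[A] Nφ ⧸ Sp) = g := by
      apply hgu
      intro x
      simp only [LinearMap.zero_apply, LinearMap.coe_comp, Function.comp_apply,
        Submodule.mkQ_apply]
      rw [eq_comm, Submodule.Quotient.mk_eq_zero]
      exact Submodule.subset_span (Set.mem_range_self x)
    rw [Submodule.eq_top_iff']
    intro y
    have : Sp.mkQ y = 0 := by rw [h1, ← h2]; rfl
    rwa [← Submodule.Quotient.mk_eq_zero, ← Submodule.mkQ_apply]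
  have htorsφ : ∀ y : Nφ, (p : A) ^ n • y = 0 := by
    intro y
    have hy : y ∈ Submodule.span A (Set.range j) := by rw [hspan]; trivial
    induction hy using Submodule.span_induction with
    | mem x hx =>
      obtain ⟨x', rfl⟩ := hx
      have : ((p : A) ^ n • j x' : Nφ) = j ((p : A) ^ n • x') := by
        rw [j.map_smulₛₗ, map_pow, map_natCast]
      rw [this, htors, map_zero]
    | zero => rw [smul_zero]
    | add x y hx hy ihx ihy => rw [smul_add, ihx, ihy, add_zero]
    | smul a x hx ihx => rw [smul_comm, ihx, smul_zero]
  -- the comparison map e : Nφ → Tw A ⊗ N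
  letI instUA : Module A (UA (Tw A ⊗[A] N)) := inferInstanceAs (Module (Tw A) (Tw A ⊗[A] N))
  obtain ⟨e, he, -⟩ := huniv (UA (Tw A ⊗[A] N))
    { toFun := fun x => toUA ((1 : Tw A) ⊗ₜ[A] x : Tw A ⊗[A] N)
      map_add' := fun x y => TensorProduct.tmul_add _ x y
      map_smul' := fun c x => by
        show (1 : Tw A) ⊗ₜ[A] (c • x) =
          (show Tw A from φ c) • ((1 : Tw A) ⊗ₜ[A] x : Tw A ⊗[A] N)
        rw [TensorProduct.tmul_smul, TensorProduct.smul_tmul', TensorProduct.smul_tmul']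
        congr 1 }
  have hofUA_smul : ∀ (c : A) (z : UA (Tw A ⊗[A] N)),
      ofUA (c • z) = (show Tw A from c) • ofUA z := fun _ _ => rfl
  -- the retraction k : Tw A ⊗ N → Nφ
  letI instTw1 : Module (Tw A) (TwM Nφ) := inferInstanceAs (Module A Nφ)
  letI instTw2 : Module A (TwM Nφ) := Module.compHom Nφ φ
  letI instTow : IsScalarTower A (Tw A) (TwM Nφ) := by
    constructor
    intro c s y
    exact mul_smul (φ c) (show A from s) (show Nφ from y)
  have hofTwM_smul : ∀ (c : Tw A) (z : TwM Nφ),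
      ofTwM (c • z) = (show A from c) • ofTwM z := fun _ _ => rfl
  set f0 : N →ₗ[A] TwM Nφ :=
    { toFun := fun x => toTwM (j x : Nφ)
      map_add' := fun x y => j.map_add x y
      map_smul' := fun c x => j.map_smulₛₗ c x } with hf0
  set k : Tw A ⊗[A] N →ₗ[Tw A] TwM Nφ := LinearMap.liftBaseChange (Tw A) f0 with hk
  have hk_tmul : ∀ (a : Tw A) (x : N),
      k (a ⊗ₜ[A] x) = toTwM ((show A from a) • (j x : Nφ)) := by
    intro a x
    rw [hk, LinearMap.liftBaseChange_tmul]
    rfl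
  have hke : ∀ y : Nφ, ofTwM (k (ofUA (e y))) = y := by
    obtain ⟨g, hg, hgu⟩ := huniv Nφ j
    have h2 : ∀ x, ofTwM (k (ofUA (e (j x)))) = j x := by
      intro x
      rw [he x]
      show ofTwM (k ((1 : Tw A) ⊗ₜ[A] x)) = (j x : Nφ)
      rw [hk_tmul]
      exact one_smul A (j x)
    set kel : Nφ →ₗ[A] Nφ :=
      { toFun := fun y => ofTwM (k (ofUA (e y)))
        map_add' := fun y z => by
          show ofTwM (k (ofUA (e (y + z)))) =
            ofTwM (k (ofUA (e y))) + ofTwM (k (ofUA (e z)))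
          rw [e.map_add, ofUA_add, k.map_add, ofTwM_add]
        map_smul' := fun c y => by
          show ofTwM (k (ofUA (e (c • y)))) = c • ofTwM (k (ofUA (e y)))
          rw [e.map_smul, hofUA_smul, k.map_smul, hofTwM_smul] } with hkel
    have h3 : kel = g := hgu kel h2
    have h4 : LinearMap.id = g := hgu _ (fun x => rfl)
    intro y
    exact LinearMap.congr_fun (h3.trans h4.symm) y
  -- d acts injectively on Nφ
  have hdNφ : ∀ y : Nφ, d • y = 0 → y = 0 := by
    intro y hy
    have h1 : (show Tw A from d) • ofUA (e y) = 0 := by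
      have h := e.map_smul d y
      rw [hy, map_zero] at h
      exact h.symm
    have h2 : (p : Tw A) ^ n • ofUA (e y) = 0 := by
      have h := e.map_smul ((p : A) ^ n) y
      rw [htorsφ y, map_zero] at h
      exact h.symm
    have h3 : ofUA (e y) = 0 := hNT _ h1 h2
    have h4 := hke y
    rw [h3, map_zero] at h4
    exact h4.symm
  -- conclusion
  have hFinj : Function.Injective F := by
    intro a b hab
    rw [← sub_eq_zero]
    apply hdNφ
    have hFab : F (a - b) = 0 := by rw [map_sub, hab, sub_self]
    rw [← hVF, hFab, map_zero]
  refine ⟨hFinj, fun x => ⟨V x, hFV x⟩, fun V' hV' => ?_⟩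
  apply LinearMap.ext
  intro x
  apply hFinj
  rw [hV' x, hFV x]
end

section
/- Let A be a commutative ring, d ∈ A, φ : A → A a ring homomorphism, and N an A-module; write φ*N = A ⊗_{A,φ} N. Let F : φ*N → N be an injective A-linear map with d·N ⊆ F(φ*N). Then there exists a unique A-linear map V : N → φ*N with F∘V = d·id_N, and this V automatically satisfies V∘F = d·id_{φ*N}. -/
/-!
`V` is `d • id` corestricted to the range of `F` and pulled back along `F ≃ range F`.
Injectivity of `F` then gives everything else: `F (V (F y)) = d • F y = F (d • y)`, and any
two maps `V, V'` with `F ∘ V = F ∘ V'` agree.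
-/

theorem LinearMap.apply_apply_eq_smul_of_injective {R M N : Type*} [Semiring R]
    [AddCommMonoid M] [Module R M] [AddCommMonoid N] [Module R N] {F : M →ₗ[R] N}
    (hF : Function.Injective F) {V : N →ₗ[R] M} {d : R} (hV : ∀ x, F (V x) = d • x) (y : M) :
    V (F y) = d • y :=
  hF <| by rw [hV, map_smul]

theorem stmt_9_general (A : Type) [CommRing A] (d : A)
    (N : Type) [AddCommGroup N] [Module A N]
    (Nφ : Type) [AddCommGroup Nφ] [Module A Nφ]
    (F : Nφ →ₗ[A] N)
    (hF : Function.Injective F)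
    (hrange : ∀ x : N, ∃ y : Nφ, F y = d • x) :
    ∃ V : N →ₗ[A] Nφ,
      (∀ x : N, F (V x) = d • x) ∧
      (∀ y : Nφ, V (F y) = d • y) ∧
      (∀ V' : N →ₗ[A] Nφ, (∀ x : N, F (V' x) = d • x) → V' = V) := by
  let V := (d • LinearMap.id).codRestrictOfInjective F hF hrange
  have hV : ∀ x, F (V x) = d • x := LinearMap.codRestrictOfInjective_comp_apply _ _ hF hrange
  exact ⟨V, hV, LinearMap.apply_apply_eq_smul_of_injective hF hV,
    fun V' hV' => LinearMap.ext fun x => hF <| (hV' x).trans (hV x).symm⟩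

/-- Breuil–Kisin windows vs generalized Breuil windows, converse direction: if
`F : φ*N → N` is an injective `A`-linear map with `d·N ⊆ F(φ*N)` (where `φ*N` is the base
change of `N` along `φ`, characterized by its universal property among `φ`-semilinear maps
out of `N`), then there is a unique `A`-linear `V : N → φ*N` with `F∘V = d·id`, and this
`V` automatically satisfies `V∘F = d·id`. -/
theorem stmt_9 (A : Type) [CommRing A] (d : A) (φ : A →+* A)
    (N : Type) [AddCommGroup N] [Module A N]
    (Nφ : Type) [AddCommGroup Nφ] [Module A Nφ]
    (j : N →ₛₗ[φ] Nφ)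
    (huniv : ∀ (P : Type) [AddCommGroup P] [Module A P] (f : N →ₛₗ[φ] P),
      ∃! g : Nφ →ₗ[A] P, ∀ x : N, g (j x) = f x)
    (F : Nφ →ₗ[A] N)
    (hF : Function.Injective F)
    (hrange : ∀ x : N, ∃ y : Nφ, F y = d • x) :
    ∃ V : N →ₗ[A] Nφ,
      (∀ x : N, F (V x) = d • x) ∧
      (∀ y : Nφ, V (F y) = d • y) ∧
      (∀ V' : N →ₗ[A] Nφ, (∀ x : N, F (V' x) = d • x) → V' = V) :=
  stmt_9_general A d N Nφ F hF hrange
end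

section
/- Let p be a prime, A a commutative ring in which p is a non-zero-divisor, n ≥ 1 an integer, and 0 → Q' →ι Q → N → 0 a short exact sequence of A-modules with Q' and Q projective and p^n·N = 0. Then there is a unique A-linear map σ : Q → Q' with ι∘σ = p^n·id_Q, it satisfies σ∘ι = p^n·id_{Q'}, and σ induces an injective A-linear map N = Q/ι(Q') → Q'/p^n·Q'. -/
/-- For a short exact sequence `0 → Q' →ι Q →π N → 0` with `Q', Q` projective over `A`,
`p` a non-zero-divisor in `A`, and `p^n·N = 0`: there is a unique `σ : Q → Q'` with
`ι∘σ = p^n·id_Q`; it satisfies `σ∘ι = p^n·id_{Q'}`; and `σ` induces an injective map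
`N = Q/ι(Q') → Q'/p^n·Q'`. -/
theorem stmt_10 (p : ℕ) (hp : p.Prime) (A : Type) [CommRing A]
    (hpnzd : (p : A) ∈ nonZeroDivisors A) (n : ℕ) (hn : 1 ≤ n)
    (Q' Q N : Type) [AddCommGroup Q'] [Module A Q'] [AddCommGroup Q] [Module A Q]
    [AddCommGroup N] [Module A N]
    [Module.Projective A Q'] [Module.Projective A Q]
    (ι : Q' →ₗ[A] Q) (π : Q →ₗ[A] N)
    (hι : Function.Injective ι) (hπ : Function.Surjective π)
    (hexact : LinearMap.range ι = LinearMap.ker π)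
    (htors : ∀ x : N, (p : A) ^ n • x = 0) :
    ∃ σ : Q →ₗ[A] Q',
      (∀ q : Q, ι (σ q) = (p : A) ^ n • q) ∧
      (∀ σ' : Q →ₗ[A] Q', (∀ q : Q, ι (σ' q) = (p : A) ^ n • q) → σ' = σ) ∧
      (∀ q' : Q', σ (ι q') = (p : A) ^ n • q') ∧
      (∀ q : Q, (∃ y : Q', σ q = (p : A) ^ n • y) → ∃ q' : Q', ι q' = q) := by

  have hmem : ∀ q : Q, (p : A) ^ n • q ∈ LinearMap.range ι := by
    intro q
    rw [hexact, LinearMap.mem_ker, map_smul, htors]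
  let e := LinearEquiv.ofInjective ι hι
  let f : Q →ₗ[A] LinearMap.range ι :=
    LinearMap.codRestrict (LinearMap.range ι) ((p : A) ^ n • LinearMap.id) hmem
  refine ⟨e.symm.toLinearMap ∘ₗ f, ?_, ?_, ?_, ?_⟩
  · intro q
    have : (ι (e.symm (f q)) : Q) = (f q : Q) := by
      have := e.apply_symm_apply (f q)
      exact congrArg Subtype.val this
    simpa [f] using this
  · intro σ' hσ'
    ext q
    apply hι
    have : (ι (e.symm (f q)) : Q) = (f q : Q) := by
      have := e.apply_symm_apply (f q)
      exact congrArg Subtype.val this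
    simp only [LinearMap.comp_apply, LinearEquiv.coe_coe]
    rw [hσ' q, this]
    simp [f]
  · intro q'
    apply hι
    have : (ι (e.symm (f (ι q'))) : Q) = (f (ι q') : Q) := by
      have := e.apply_symm_apply (f (ι q'))
      exact congrArg Subtype.val this
    simp only [LinearMap.comp_apply, LinearEquiv.coe_coe]
    rw [this, map_smul]
    simp [f]
  · intro q ⟨y, hy⟩
    -- ι (σ q) = p^n • q and ι (σ q) = p^n • ι y
    have h1 : (p : A) ^ n • q = (p : A) ^ n • ι y := by
      have : (ι (e.symm (f q)) : Q) = (f q : Q) := by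
        have := e.apply_symm_apply (f q)
        exact congrArg Subtype.val this
      calc (p : A) ^ n • q = (f q : Q) := by simp [f]
        _ = ι (e.symm (f q)) := this.symm
        _ = ι ((p : A) ^ n • y) := by
            have : e.symm (f q) = (p : A) ^ n • y := hy
            rw [this]
        _ = (p : A) ^ n • ι y := by rw [map_smul]
    -- Q is torsion free w.r.t. p^n
    have hQtf : ∀ z : Q, (p : A) ^ n • z = 0 → z = 0 := by
      obtain ⟨g, hgs⟩ := Module.projective_def.mp (inferInstance : Module.Projective A Q)
      intro z hz
      have hsz : (p : A) ^ n • g z = 0 := by rw [← map_smul, hz, map_zero]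
      have hgz : g z = 0 := by
        ext x
        have : ((p : A) ^ n • g z) x = (0 : Q →₀ A) x := by rw [hsz]
        simp only [Finsupp.coe_smul, Pi.smul_apply, smul_eq_mul, Finsupp.coe_zero,
          Pi.zero_apply] at this ⊢
        exact (mem_nonZeroDivisors_iff_right.mp (pow_mem hpnzd n)) _ (by rw [mul_comm]; exact this)
      have := hgs z
      rw [hgz, map_zero] at this
      exact this.symm
    refine ⟨y, ?_⟩
    have := hQtf (ι y - q) (by rw [smul_sub, ← h1, sub_self])
    exact sub_eq_zero.mp this
end

section
/- Let p be a prime, A a commutative ring, and 0 → Q' →f Q → N → 0 a short exact sequence of A-modules with Q' and Q projective and p^n·N = 0 for some integer n ≥ 1. Let ψ : A → A' be a ring homomorphism to a commutative ring A' in which p is a non-zero-divisor. Then the induced map A' ⊗_A Q' → A' ⊗_A Q is injective; consequently 0 → A'⊗_A Q' → A'⊗_A Q → A'⊗_A N → 0 is exact, and A'⊗_A N is again a p^n-torsion module of projective dimension at most one over A'. -/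
open TensorProduct

/-- In a projective module over a ring where `c` is a non-zero-divisor (applied with
`c = p^n`), scalar multiplication by `c` is injective. -/
lemma proj_smul_inj {R M : Type} [CommRing R] [AddCommGroup M] [Module R M]
    [hM : Module.Projective R M] {c : R} (hc : c ∈ nonZeroDivisors R)
    {m : M} (h : c • m = 0) : m = 0 := by
  obtain ⟨s, hs⟩ := hM
  have h1 : c • s m = 0 := by rw [← map_smul, h, map_zero]
  have h2 : s m = 0 := by
    ext i
    have := congrArg (fun v => Finsupp.toFun v i) h1
    simpa using hc.2 _ (by simpa [mul_comm] using DFunLike.congr_fun h1 i)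
  have := hs m
  rw [h2, map_zero] at this
  exact this.symm

/-- Base change of `p`-power torsion modules of projective dimension one: given a short
exact sequence `0 → Q' →f Q →π N → 0` of `A`-modules with `Q', Q` projective and
`p^n·N = 0`, and a ring homomorphism `ψ : A → A'` (an `A`-algebra structure on `A'`) with
`p` a non-zero-divisor in `A'`, the base-changed map `A' ⊗ Q' → A' ⊗ Q` is injective; the
tensored sequence is exact; and `A' ⊗ N` is again `p^n`-torsion with a length-one
resolution by projective `A'`-modules. -/
theorem stmt_11 (p : ℕ) (hp : p.Prime) (n : ℕ) (hn : 1 ≤ n)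
    (A : Type) [CommRing A]
    (Q' Q N : Type) [AddCommGroup Q'] [Module A Q'] [AddCommGroup Q] [Module A Q]
    [AddCommGroup N] [Module A N]
    [Module.Projective A Q'] [Module.Projective A Q]
    (f : Q' →ₗ[A] Q) (π : Q →ₗ[A] N)
    (hf : Function.Injective f) (hπ : Function.Surjective π)
    (hexact : LinearMap.range f = LinearMap.ker π)
    (htors : ∀ x : N, (p : A) ^ n • x = 0)
    (A' : Type) [CommRing A'] [Algebra A A']
    (hpnzd : (p : A') ∈ nonZeroDivisors A') :
    Function.Injective (LinearMap.baseChange A' f) ∧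
    LinearMap.range (LinearMap.baseChange A' f)
      = LinearMap.ker (LinearMap.baseChange A' π) ∧
    Function.Surjective (LinearMap.baseChange A' π) ∧
    (∀ x : A' ⊗[A] N, (p : A') ^ n • x = 0) ∧
    Module.Projective A' (A' ⊗[A] Q') ∧
    Module.Projective A' (A' ⊗[A] Q) := by
  classical
  -- p^n • id on Q lands in range f
  have hmem : ∀ x : Q, (p : A) ^ n • x ∈ LinearMap.range f := by
    intro x
    rw [hexact, LinearMap.mem_ker, map_smul, htors]
  set e := LinearEquiv.ofInjective f hf with he
  let h : Q →ₗ[A] LinearMap.range f :=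
    LinearMap.codRestrict _ ((p : A) ^ n • LinearMap.id) hmem
  let g : Q →ₗ[A] Q' := e.symm.toLinearMap ∘ₗ h
  have hfg : ∀ x : Q, f (g x) = (p : A) ^ n • x := by
    intro x
    have h1 : (e (e.symm (h x)) : Q) = (h x : Q) := by rw [e.apply_symm_apply]
    have h2 : ∀ y : Q', (e y : Q) = f y := fun y => rfl
    simp only [g, LinearMap.comp_apply, LinearEquiv.coe_coe]
    rw [← h2, h1]
    rfl
  have hgf : ∀ x : Q', g (f x) = (p : A) ^ n • x := by
    intro x
    apply hf
    rw [hfg, map_smul]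
  -- bridging scalars
  have hsmul : ∀ (M : Type) [AddCommGroup M] [Module A M] [Module A' M]
      [IsScalarTower A A' M] (z : M), (p : A) ^ n • z = (p : A') ^ n • z := by
    intro M _ _ _ _ z
    rw [← algebraMap_smul A' ((p : A) ^ n) z, map_pow, map_natCast]
  -- G ∘ F = p^n on A' ⊗ Q'
  have hGF : ∀ z : A' ⊗[A] Q',
      LinearMap.baseChange A' g (LinearMap.baseChange A' f z) = (p : A') ^ n • z := by
    intro z
    induction z using TensorProduct.induction_on with
    | zero => simp
    | tmul a q =>
        rw [LinearMap.baseChange_tmul, LinearMap.baseChange_tmul, hgf,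
          TensorProduct.tmul_smul]
        exact hsmul (A' ⊗[A] Q') _
    | add x y hx hy => simp [map_add, hx, hy, smul_add]
  have instP : Module.Projective A' (A' ⊗[A] Q') := inferInstance
  have instPQ : Module.Projective A' (A' ⊗[A] Q) := inferInstance
  have hpn : (p : A') ^ n ∈ nonZeroDivisors A' := pow_mem hpnzd n
  -- injectivity
  have hinj : Function.Injective (LinearMap.baseChange A' f) := by
    rw [← LinearMap.ker_eq_bot]
    rw [LinearMap.ker_eq_bot']
    intro z hz
    have : (p : A') ^ n • z = 0 := by rw [← hGF z, hz, map_zero]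
    exact proj_smul_inj hpn this
  -- exactness
  have hex : Function.Exact f π := by
    rw [LinearMap.exact_iff]; exact hexact.symm
  have hexT : Function.Exact (f.lTensor A') (π.lTensor A') := lTensor_exact A' hex hπ
  have hrange : LinearMap.range (LinearMap.baseChange A' f)
      = LinearMap.ker (LinearMap.baseChange A' π) := by
    have hT := (LinearMap.exact_iff.mp hexT).symm
    ext x
    constructor
    · rintro ⟨y, rfl⟩
      have hπf : π ∘ₗ f = 0 := by
        ext q'
        have : f q' ∈ LinearMap.ker π := hexact ▸ LinearMap.mem_range_self f q'
        simpa using this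
      have hcomp : LinearMap.baseChange A' π ∘ₗ LinearMap.baseChange A' f = 0 := by
        rw [← LinearMap.baseChange_comp, hπf]
        ext a
        simp
      rw [LinearMap.mem_ker, ← LinearMap.comp_apply, hcomp, LinearMap.zero_apply]
    · intro hx
      have hx' : x ∈ LinearMap.ker (π.lTensor A') := hx
      have : x ∈ LinearMap.range (f.lTensor A') := hT ▸ hx'
      obtain ⟨y, hy⟩ := this
      exact ⟨y, hy⟩
  have hsurj : Function.Surjective (LinearMap.baseChange A' π) :=
    LinearMap.lTensor_surjective A' hπ
  have htN : ∀ x : A' ⊗[A] N, (p : A') ^ n • x = 0 := by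
    intro x
    rw [← hsmul (A' ⊗[A] N) x]
    induction x using TensorProduct.induction_on with
    | zero => simp
    | tmul a m => rw [← TensorProduct.tmul_smul, htors, TensorProduct.tmul_zero]
    | add x y hx hy => rw [smul_add, hx, hy, add_zero]
  exact ⟨hinj, hrange, hsurj, htN, instP, instPQ⟩
end

section
/- Let p be a prime, κ an algebraically closed field of characteristic p, and h ≥ 1 an integer. Let T : κ^h → κ^h be an additive map that is semilinear over the Frobenius of κ, i.e. T(c·v) = c^p·T(v) for all c ∈ κ and v ∈ κ^h. Then the map v ↦ T(v) − v from κ^h to κ^h is surjective. -/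
open Polynomial Finset

private noncomputable def auxX (p : ℕ) {κ : Type} [Field κ] (a : ℕ → κ) : ℕ → Polynomial κ
  | 0 => Polynomial.C (a 0) * Polynomial.X ^ p - 1
  | (i+1) => (auxX p a i) ^ p + Polynomial.C (a (i+1)) * Polynomial.X ^ p

private theorem auxX_deriv (p : ℕ) {κ : Type} [Field κ] (hpκ : (p : κ) = 0) (a : ℕ → κ) :
    ∀ i, Polynomial.derivative (auxX p a i) = 0 := by
  intro i
  induction i with
  | zero => simp [auxX, derivative_X_pow, hpκ]
  | succ k ih => simp [auxX, derivative_pow, derivative_X_pow, hpκ, ih]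

/-- For a Frobenius-semilinear additive endomorphism `T` of `κ^h` over an algebraically
closed field `κ` of characteristic `p`, the map `v ↦ T v - v` is surjective. -/
theorem stmt_12 (p : ℕ) (hp : p.Prime) (κ : Type) [Field κ] [IsAlgClosed κ] [CharP κ p]
    (h : ℕ) (hh : 1 ≤ h)
    (T : (Fin h → κ) →+ (Fin h → κ))
    (hT : ∀ (c : κ) (v : Fin h → κ), T (c • v) = c ^ p • T v) :
    Function.Surjective (fun v : Fin h → κ => T v - v) := by
  have hpκ : (p : κ) = 0 := CharP.cast_eq_zero κ p
  classical
  intro w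
  set u : ℕ → (Fin h → κ) := fun i => T^[i] w with hu
  have hu0 : u 0 = w := rfl
  have huS : ∀ i, u (i+1) = T (u i) := fun i => Function.iterate_succ_apply' T i w
  obtain ⟨n, a, hna⟩ : ∃ n, ∃ a : ℕ → κ, u n = ∑ i ∈ range n, a i • u i := by
    have hnli : ¬ LinearIndependent κ (fun i : Fin (h+1) => u i) := by
      intro hli
      have := hli.fintype_card_le_finrank
      simp [Module.finrank_fin_fun] at this
    rw [Fintype.not_linearIndependent_iff] at hnli
    obtain ⟨g, hg, i0, hi0⟩ := hnli
    set g' : ℕ → κ := fun k => if hk : k < h+1 then g ⟨k, hk⟩ else 0 with hg'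
    have hgsum : ∑ k ∈ range (h+1), g' k • u k = 0 := by
      rw [← Fin.sum_univ_eq_sum_range (fun k => g' k • u k) (h+1)]
      rw [← hg]
      apply Finset.sum_congr rfl
      intro i _
      simp [hg', i.isLt, not_lt.mpr i.is_le]
    set s : Finset ℕ := (range (h+1)).filter (fun k => g' k ≠ 0) with hs
    have hsne : s.Nonempty := ⟨i0, by simp [hs, i0.isLt, i0.is_le, hg', hi0]⟩
    set j : ℕ := s.max' hsne with hj
    have hjs : j ∈ s := s.max'_mem hsne
    have hjlt : j < h + 1 := (mem_filter.mp hjs).1 |> mem_range.mp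
    have hgj : g' j ≠ 0 := (mem_filter.mp hjs).2
    have hsum2 : ∑ k ∈ range (j+1), g' k • u k = 0 := by
      rw [← hgsum]
      apply Finset.sum_subset
      · exact range_subset_range.mpr hjlt
      · intro k hk1 hk2
        have hkj : j < k := by
          simp only [mem_range] at hk1 hk2; omega
        have hgk : g' k = 0 := by
          by_contra hgk
          exact absurd (s.le_max' k (mem_filter.mpr ⟨hk1, hgk⟩)) (Nat.not_le.mpr hkj)
        simp [hgk]
    rw [Finset.sum_range_succ] at hsum2
    refine ⟨j, fun i => -(g' j)⁻¹ * g' i, ?_⟩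
    have h1 : g' j • u j = -∑ i ∈ range j, g' i • u i :=
      eq_neg_of_add_eq_zero_left (by rw [add_comm]; exact hsum2)
    have h2 : u j = (g' j)⁻¹ • (g' j • u j) := by
      rw [smul_smul, inv_mul_cancel₀ hgj, one_smul]
    rw [h2, h1, smul_neg, Finset.smul_sum, ← Finset.sum_neg_distrib]
    apply Finset.sum_congr rfl
    intro i _
    simp [smul_smul, neg_mul]
  rcases Nat.eq_zero_or_pos n with hn0 | hn
  · refine ⟨0, ?_⟩
    subst hn0
    simp only [range_zero, Finset.sum_empty] at hna
    show T 0 - 0 = w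
    rw [← hu0, hna]
    simp
  obtain ⟨m, rfl⟩ : ∃ m, n = m + 1 := ⟨n - 1, by omega⟩
  set P : Polynomial κ := auxX p a m - Polynomial.X with hP
  have hPd : Polynomial.derivative P = -1 := by
    simp [hP, auxX_deriv p hpκ a m]
  have hPdeg : P.degree ≠ 0 := by
    intro hdeg
    rw [Polynomial.eq_C_of_degree_le_zero (le_of_eq hdeg)] at hPd
    simp at hPd
  obtain ⟨t, ht⟩ := IsAlgClosed.exists_root P hPdeg
  have hxm : (auxX p a m).eval t = t := by
    have ht2 : P.eval t = 0 := ht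
    rw [hP, Polynomial.eval_sub, Polynomial.eval_X, sub_eq_zero] at ht2
    exact ht2
  set x : ℕ → κ := fun i => (auxX p a i).eval t with hx
  have hxm2 : x m = t := hxm
  have hx0 : x 0 = a 0 * t ^ p - 1 := by simp [hx, auxX]
  have hxS : ∀ i, x (i+1) = x i ^ p + a (i+1) * t ^ p := by
    intro i; simp [hx, auxX]
  refine ⟨∑ i ∈ range (m+1), x i • u i, ?_⟩
  show T (∑ i ∈ range (m+1), x i • u i) - ∑ i ∈ range (m+1), x i • u i = w
  rw [sub_eq_iff_eq_add]
  have hTv : T (∑ i ∈ range (m+1), x i • u i)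
      = ∑ i ∈ range (m+1), (x i ^ p) • u (i+1) := by
    rw [map_sum]
    exact Finset.sum_congr rfl fun i _ => by rw [hT, ← huS]
  rw [hTv, Finset.sum_range_succ, hxm2, hna, Finset.smul_sum]
  have hshift : ∑ i ∈ range m, x i ^ p • u (i+1)
      = ∑ j ∈ range (m+1), (if j = 0 then 0 else x (j-1) ^ p) • u j := by
    rw [Finset.sum_range_succ']
    simp
  rw [hshift]
  have hw : w = ∑ j ∈ range (m+1), (if j = 0 then (1:κ) else 0) • u j := by
    rw [← hu0]
    have hterm : ∀ j ∈ range (m+1), (if j = 0 then (1:κ) else 0) • u j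
        = if j = 0 then u j else 0 := by
      intro j _; split <;> simp
    rw [Finset.sum_congr rfl hterm, Finset.sum_ite_eq' (range (m+1)) 0 u]
    simp
  rw [hw, ← Finset.sum_add_distrib, ← Finset.sum_add_distrib]
  apply Finset.sum_congr rfl
  intro j hj
  rcases j with _ | k
  · simp only [if_pos, reduceIte, zero_smul, zero_add, one_smul]
    rw [smul_smul, hx0]
    have hre : u 0 + (a 0 * t ^ p - 1) • u 0 = (1 + (a 0 * t ^ p - 1)) • u 0 := by
      rw [add_smul, one_smul]
    rw [hre]
    congr 1
    ring
  · simp only [Nat.succ_ne_zero, reduceIte, Nat.add_sub_cancel, zero_smul, add_zero]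
    rw [smul_smul, hxS k, ← add_smul]
    congr 1
    ring
end

section
/- Let p be a prime and S a semiperfect commutative ring of characteristic p. Let S^♭ be the inverse limit perfection of S, θ : S^♭ → S the projection f ↦ f(0), J = ker θ, and φ the Frobenius automorphism of S^♭. Then the kernel of the Frobenius endomorphism of S is a nilpotent ideal (i.e. S is F-nilpotent) if and only if there exists an integer r ≥ 1 with J^{p^r} ⊆ φ(J). -/
section Aux

variable (p : ℕ) [Fact p.Prime] (S : Type) [CommRing S] [CharP S p]

/-- If Frobenius is surjective on `S`, then `coeff 0 : S^♭ → S` is surjective. -/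
theorem aux_coeff_zero_surjective (hsemi : Function.Surjective (frobenius S p)) :
    Function.Surjective (Perfection.coeff S p 0) := by
  intro a
  -- build a compatible sequence of p-th roots
  let g : ℕ → S := fun n => Nat.rec a (fun _ b => Classical.choose (hsemi b)) n
  have hg : ∀ n, g (n + 1) ^ p = g n := fun n => Classical.choose_spec (hsemi (g n))
  exact ⟨⟨g, hg⟩, rfl⟩

theorem aux_coeff_one_surjective (hsemi : Function.Surjective (frobenius S p)) :
    Function.Surjective (Perfection.coeff S p 1) := by
  intro a
  obtain ⟨f, hf⟩ := aux_coeff_zero_surjective p S hsemi a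
  exact ⟨frobenius _ p f, by rwa [Perfection.coeff_frobenius]⟩

/-- The image of `J = ker (coeff 0)` under the Frobenius of the perfection is
`ker (coeff 1)`. -/
theorem aux_map_frobenius_ker :
    Ideal.map (frobenius (Perfection S p) p) (RingHom.ker (Perfection.coeff S p 0)) =
      RingHom.ker (Perfection.coeff S p 1) := by
  apply le_antisymm
  · rw [Ideal.map_le_iff_le_comap]
    intro f hf
    simp only [RingHom.mem_ker] at hf
    simp only [Ideal.mem_comap, RingHom.mem_ker, Perfection.coeff_frobenius]
    exact hf
  · intro x hx
    simp only [RingHom.mem_ker] at hx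
    have hx0 : Perfection.pthRoot S p x ∈ RingHom.ker (Perfection.coeff S p 0) := by
      simp only [RingHom.mem_ker]
      exact hx
    have : frobenius (Perfection S p) p (Perfection.pthRoot S p x) = x := by
      have := congrArg (fun h : Perfection S p →+* Perfection S p => h x)
        (Perfection.frobenius_pthRoot (R := S) (p := p))
      simpa using this
    exact this ▸ Ideal.mem_map_of_mem _ hx0

/-- `ker (frobenius S p)` is the image of `J` under `coeff 1`. -/
theorem aux_ker_frobenius_eq (hsemi : Function.Surjective (frobenius S p)) :
    Ideal.map (Perfection.coeff S p 1) (RingHom.ker (Perfection.coeff S p 0)) =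
      RingHom.ker (frobenius S p) := by
  apply le_antisymm
  · rw [Ideal.map_le_iff_le_comap]
    intro f hf
    simp only [RingHom.mem_ker] at hf
    simp only [Ideal.mem_comap, RingHom.mem_ker, frobenius_def]
    rw [Perfection.coeff_pow_p']
    exact hf
  · intro a ha
    simp only [RingHom.mem_ker, frobenius_def] at ha
    obtain ⟨f, hf⟩ := aux_coeff_one_surjective p S hsemi a
    have hf0 : f ∈ RingHom.ker (Perfection.coeff S p 0) := by
      simp only [RingHom.mem_ker]
      rw [← Perfection.coeff_pow_p', hf, ha]
    exact hf ▸ Ideal.mem_map_of_mem _ hf0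

end Aux

/-- A semiperfect ring `S` of characteristic `p` is `F`-nilpotent (the kernel of its
Frobenius is a nilpotent ideal) if and only if the kernel `J` of `θ : S^♭ → S` (with
`S^♭` the inverse limit perfection and `θ = f ↦ f(0)`) satisfies `J^(p^r) ⊆ φ(J)` for
some `r ≥ 1`, where `φ` is the Frobenius automorphism of `S^♭`. -/
theorem stmt_13 (p : ℕ) [Fact p.Prime] (S : Type) [CommRing S] [CharP S p]
    (hsemi : Function.Surjective (frobenius S p)) :
    (∃ k : ℕ, 1 ≤ k ∧ (RingHom.ker (frobenius S p)) ^ k = ⊥) ↔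
    (∃ r : ℕ, 1 ≤ r ∧
      (RingHom.ker (Perfection.coeff S p 0)) ^ (p ^ r) ≤
        Ideal.map (frobenius (Perfection S p) p)
          (RingHom.ker (Perfection.coeff S p 0))) := by
  have hp := (Fact.out : p.Prime)
  set J := RingHom.ker (Perfection.coeff S p 0) with hJ
  have hmap := aux_ker_frobenius_eq p S hsemi
  rw [aux_map_frobenius_ker p S]
  constructor
  · rintro ⟨k, hk1, hk⟩
    refine ⟨k, hk1, ?_⟩
    have hkp : k ≤ p ^ k := Nat.le_of_lt (Nat.lt_pow_self (n := k) hp.one_lt)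
    rw [RingHom.ker_eq_comap_bot, ← Ideal.map_le_iff_le_comap]
    calc Ideal.map (Perfection.coeff S p 1) (J ^ p ^ k)
        = (Ideal.map (Perfection.coeff S p 1) J) ^ p ^ k := Ideal.map_pow _ _ _
      _ = (RingHom.ker (frobenius S p)) ^ p ^ k := by rw [hmap]
      _ ≤ (RingHom.ker (frobenius S p)) ^ k := Ideal.pow_le_pow_right hkp
      _ = ⊥ := hk
  · rintro ⟨r, hr1, hr⟩
    refine ⟨p ^ r, Nat.one_le_pow _ _ hp.pos, ?_⟩
    rw [le_bot_iff.symm]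
    calc (RingHom.ker (frobenius S p)) ^ p ^ r
        = (Ideal.map (Perfection.coeff S p 1) J) ^ p ^ r := by rw [hmap]
      _ = Ideal.map (Perfection.coeff S p 1) (J ^ p ^ r) := (Ideal.map_pow _ _ _).symm
      _ ≤ Ideal.map (Perfection.coeff S p 1) (RingHom.ker (Perfection.coeff S p 1)) :=
          Ideal.map_mono hr
      _ ≤ ⊥ := by
          rw [Ideal.map_le_iff_le_comap, ← RingHom.ker_eq_comap_bot]
end

section
/- Let p be a prime and S a semiperfect commutative ring of characteristic p. Let S^♭ be the inverse limit perfection of S, θ : S^♭ → S the projection f ↦ f(0), J = ker θ, and φ the Frobenius automorphism of S^♭. Then the map J → S, f ↦ f(1), takes values in α_p(S) = {a ∈ S : a^p = 0}, is surjective onto α_p(S), and for f ∈ J one has f(1) = 0 if and only if f ∈ φ(J). Consequently f ↦ f(1) induces an isomorphism of additive groups J/φ(J) ≅ α_p(S). -/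
/-- For a semiperfect ring `S` of characteristic `p`, with `S^♭` its inverse limit
perfection, `θ = (f ↦ f 0) : S^♭ → S`, `J = ker θ` and `φ` the Frobenius automorphism of
`S^♭`: the map `f ↦ f 1` carries `J` into `α_p(S) = {a : a^p = 0}`, surjects onto
`α_p(S)`, has `f 1 = 0` exactly for `f ∈ φ(J)`, and identifies elements of `J` exactly
when their difference lies in `φ(J)`; i.e. it induces an additive isomorphism
`J/φ(J) ≅ α_p(S)`. -/
theorem stmt_14 (p : ℕ) [Fact p.Prime] (S : Type) [CommRing S] [CharP S p]
    (hsemi : Function.Surjective (frobenius S p)) :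
    (∀ f ∈ RingHom.ker (Perfection.coeff S p 0), (Perfection.coeff S p 1 f) ^ p = 0) ∧
    (∀ a : S, a ^ p = 0 →
      ∃ f ∈ RingHom.ker (Perfection.coeff S p 0), Perfection.coeff S p 1 f = a) ∧
    (∀ f ∈ RingHom.ker (Perfection.coeff S p 0),
      (Perfection.coeff S p 1 f = 0 ↔
        f ∈ Ideal.map (frobenius (Perfection S p) p)
              (RingHom.ker (Perfection.coeff S p 0)))) ∧
    (∀ f ∈ RingHom.ker (Perfection.coeff S p 0),
      ∀ g ∈ RingHom.ker (Perfection.coeff S p 0),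
        (Perfection.coeff S p 1 f = Perfection.coeff S p 1 g ↔
          f - g ∈ Ideal.map (frobenius (Perfection S p) p)
                    (RingHom.ker (Perfection.coeff S p 0)))) := by
  have hmem : ∀ f, f ∈ RingHom.ker (Perfection.coeff S p 0) ↔ Perfection.coeff S p 0 f = 0 :=
    fun f => RingHom.mem_ker
  -- frobenius on Perfection is surjective
  have hfrobsurj : Function.Surjective (frobenius (Perfection S p) p) :=
    fun f => ⟨Perfection.pthRoot S p f, RingHom.congr_fun (Perfection.frobenius_pthRoot) f⟩
  have key : ∀ f ∈ RingHom.ker (Perfection.coeff S p 0),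
      (Perfection.coeff S p 1 f = 0 ↔
        f ∈ Ideal.map (frobenius (Perfection S p) p)
              (RingHom.ker (Perfection.coeff S p 0))) := by
    intro f hf
    constructor
    · intro h1
      have hg : Perfection.pthRoot S p f ∈ RingHom.ker (Perfection.coeff S p 0) := by
        rw [hmem]; exact h1
      have : frobenius (Perfection S p) p (Perfection.pthRoot S p f) = f :=
        RingHom.congr_fun (Perfection.frobenius_pthRoot) f
      exact this ▸ Ideal.mem_map_of_mem _ hg
    · intro hmap
      unfold Ideal.map at hmap; rw [Ideal.mem_span] at hmap
      have : f ∈ Ideal.comap (Perfection.coeff S p 1) ⊥ := by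
        apply hmap
        rintro x ⟨g, hg, rfl⟩
        simp only [SetLike.mem_coe, Ideal.mem_comap, Ideal.mem_bot]
        rw [Perfection.coeff_frobenius]
        exact (hmem g).mp hg
      simpa using this
  refine ⟨?_, ?_, key, ?_⟩
  · intro f hf
    rw [Perfection.coeff_pow_p']
    exact (hmem f).mp hf
  · intro a ha
    -- build g with coeff 0 g = a
    let s : ℕ → S := fun n => Nat.rec a (fun _ x => (hsemi x).choose) n
    have hs : ∀ n, s (n + 1) ^ p = s n := fun n => (hsemi (s n)).choose_spec
    set g : Perfection S p := ⟨s, hs⟩ with hgdef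
    refine ⟨frobenius _ p g, ?_, ?_⟩
    · rw [hmem]
      have : Perfection.coeff S p 0 (frobenius _ p g) = (Perfection.coeff S p 0 g) ^ p := by
        rw [frobenius_def, map_pow]
      rw [this]
      show (s 0) ^ p = 0
      exact ha
    · rw [Perfection.coeff_frobenius]; rfl
  · intro f hf g hg
    have hfg : f - g ∈ RingHom.ker (Perfection.coeff S p 0) := by
      rw [hmem] at *; rw [map_sub, hf, hg, sub_zero]
    rw [← key (f - g) hfg, map_sub, sub_eq_zero]
end

section
/- Let p be a prime and S a semiperfect commutative ring of characteristic p. Let S^♭ be the inverse limit perfection of S, θ : S^♭ → S the projection f ↦ f(0), J = ker θ, and φ the Frobenius automorphism of S^♭. For every u ∈ S^♭ with u − 1 ∈ J one has (u(1))^p = 1; the map u ↦ u(1) from 1 + J = {u ∈ S^♭ : u − 1 ∈ J} to μ_p(S) = {z ∈ S : z^p = 1} is surjective; and for u, u' ∈ 1 + J one has u(1) = u'(1) if and only if u − u' ∈ φ(J). -/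
/-- Auxiliary: if Frobenius on `S` is surjective, so is `Perfection.coeff S p 0`. -/
lemma coeff_zero_surj (p : ℕ) [Fact p.Prime] (S : Type) [CommRing S] [CharP S p]
    (hsemi : Function.Surjective (frobenius S p)) (z : S) :
    ∃ w : Perfection S p, Perfection.coeff S p 0 w = z := by
  choose r hr using hsemi
  refine ⟨⟨fun n => r^[n] z, fun n => ?_⟩, rfl⟩
  show r^[n+1] z ^ p = r^[n] z
  rw [Function.iterate_succ_apply', ← frobenius_def]
  exact hr _

/-- For a semiperfect ring `S` of characteristic `p`, with `S^♭` its inverse limit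
perfection, `θ = (f ↦ f 0) : S^♭ → S`, `J = ker θ` and `φ` the Frobenius automorphism of
`S^♭`: for `u ∈ 1 + J` one has `(u 1)^p = 1`; the map `u ↦ u 1` surjects from `1 + J`
onto `μ_p(S) = {z : z^p = 1}`; and two elements `u, u' ∈ 1 + J` have the same image if
and only if `u - u' ∈ φ(J)`. -/
theorem stmt_15 (p : ℕ) [Fact p.Prime] (S : Type) [CommRing S] [CharP S p]
    (hsemi : Function.Surjective (frobenius S p)) :
    (∀ u : Perfection S p, u - 1 ∈ RingHom.ker (Perfection.coeff S p 0) →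
      (Perfection.coeff S p 1 u) ^ p = 1) ∧
    (∀ z : S, z ^ p = 1 →
      ∃ u : Perfection S p, u - 1 ∈ RingHom.ker (Perfection.coeff S p 0) ∧
        Perfection.coeff S p 1 u = z) ∧
    (∀ u u' : Perfection S p,
      u - 1 ∈ RingHom.ker (Perfection.coeff S p 0) →
      u' - 1 ∈ RingHom.ker (Perfection.coeff S p 0) →
      (Perfection.coeff S p 1 u = Perfection.coeff S p 1 u' ↔
        u - u' ∈ Ideal.map (frobenius (Perfection S p) p)
                   (RingHom.ker (Perfection.coeff S p 0)))) := by
  have key : ∀ u : Perfection S p, u - 1 ∈ RingHom.ker (Perfection.coeff S p 0) →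
      Perfection.coeff S p 0 u = 1 := by
    intro u hu
    rw [RingHom.mem_ker, map_sub, map_one, sub_eq_zero] at hu
    exact hu
  refine ⟨fun u hu => ?_, fun z hz => ?_, fun u u' hu hu' => ?_⟩
  · rw [Perfection.coeff_pow_p', key u hu]
  · obtain ⟨w, hw⟩ := coeff_zero_surj p S hsemi z
    refine ⟨w ^ p, ?_, ?_⟩
    · rw [RingHom.mem_ker, map_sub, map_one, map_pow, hw, hz, sub_self]
    · rw [Perfection.coeff_pow_p, hw]
  · have hmap : ∀ x : Perfection S p,
        x ∈ Ideal.map (frobenius (Perfection S p) p)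
          (RingHom.ker (Perfection.coeff S p 0)) ↔ Perfection.coeff S p 1 x = 0 := by
      intro x
      constructor
      · intro hx
        have hle : Ideal.map (frobenius (Perfection S p) p)
            (RingHom.ker (Perfection.coeff S p 0)) ≤ RingHom.ker (Perfection.coeff S p 1) := by
          rw [Ideal.map_le_iff_le_comap]
          intro y hy
          simp only [Ideal.mem_comap, RingHom.mem_ker] at *
          rw [Perfection.coeff_frobenius, hy]
        exact hle hx
      · intro hx
        have : x = frobenius (Perfection S p) p (Perfection.pthRoot S p x) := by
          exact (congrFun (congrArg (fun f => f.toFun)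
            (Perfection.frobenius_pthRoot (R := S) (p := p))) x).symm
        rw [this]
        refine Ideal.mem_map_of_mem _ ?_
        rw [RingHom.mem_ker, show Perfection.coeff S p 0 (Perfection.pthRoot S p x) =
          Perfection.coeff S p 1 x from rfl, hx]
    rw [hmap, map_sub, sub_eq_zero]
end

section
/- For every prime p and all integers h ≥ 1, n ≥ 1 there exists an integer M ≥ n, depending only on p, h and n, with the following property. Let R be a perfect commutative ring of characteristic p, W = W(R) its ring of p-typical Witt vectors, and φ : W → W the Witt vector Frobenius, applied entrywise to matrices. Fix an integer d with 0 ≤ d ≤ h and let J₁, J₂ ∈ M_h(W) be the block-diagonal matrices J₁ = diag(p·1_{h−d}, 1_d) and J₂ = diag(1_{h−d}, p·1_d). Let N ≥ M+1 be an integer, let g ∈ M_h(W) be invertible, and suppose given matrices A⁰, A⁻¹, B⁰, B⁻¹, g' ∈ M_h(W), with g' invertible modulo p^N, satisfying the following congruences modulo p^N·M_h(W): (a) Aⁱ·Bⁱ ≡ Bⁱ·Aⁱ ≡ p^n·1 for i ∈ {0,−1}; (b) A⁰·J₂ ≡ J₂·A⁻¹, J₁·A⁰ ≡ A⁻¹·J₁,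 B⁰·J₂ ≡ J₂·B⁻¹, J₁·B⁰ ≡ B⁻¹·J₁; (c) A⁻¹·g ≡ g'·φ(A⁰) and B⁻¹·g' ≡ g·φ(B⁰). Then there exist matrices Ã⁰, Ã⁻¹, B̃⁰, B̃⁻¹ ∈ M_h(W) and an invertible matrix g̃' ∈ M_h(W), each congruent modulo p^{N−M}·M_h(W) to A⁰, A⁻¹, B⁰, B⁻¹, g' respectively, which satisfy the corresponding identities exactly: Ãⁱ·B̃ⁱ = B̃ⁱ·Ãⁱ = p^n·1 for i ∈ {0,−1}; Ã⁰·J₂ = J₂·Ã⁻¹, J₁·Ã⁰ = Ã⁻¹·J₁, B̃⁰·J₂ = J₂·B̃⁻¹, J₁·B̃⁰ = B̃⁻¹·J₁; Ã⁻¹·g = g̃'·φ(Ã⁰) and B̃⁻¹·g̃' = g·φ(B̃⁰). -/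
/-- Congruence of square matrices modulo a scalar `s`: `X ≡ Y` iff `X - Y ∈ s·M_h`. -/
def matCong {W : Type} [CommRing W] {h : ℕ} (s : W)
    (X Y : Matrix (Fin h) (Fin h) W) : Prop :=
  ∃ C : Matrix (Fin h) (Fin h) W, X - Y = s • C

/-- The Witt vector Frobenius applied entrywise to a square matrix over `W(R)`. -/
noncomputable def wittFrobMap (p : ℕ) [Fact p.Prime] (R : Type) [CommRing R] {h : ℕ}
    (X : Matrix (Fin h) (Fin h) (WittVector p R)) :
    Matrix (Fin h) (Fin h) (WittVector p R) :=
  X.map ⇑(WittVector.frobenius (p := p) (R := R))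

set_option linter.unusedSectionVars false
set_option synthInstance.maxHeartbeats 1000000
set_option maxHeartbeats 4000000

set_option linter.unusedSectionVars false

open WittVector

variable {p : ℕ} [Fact p.Prime] {R : Type} [CommRing R] [CharP R p]

local notation "𝕎" => WittVector p R

/-- vanishing of coefficients below `k` -/
def vsm (k : ℕ) (x : 𝕎) : Prop := ∀ i < k, x.coeff i = 0

lemma vsm_iff_truncate {k : ℕ} {x : 𝕎} : vsm k x ↔ WittVector.truncate k x = 0 := by
  constructor
  · intro hx
    apply TruncatedWittVector.ext
    intro i
    rw [WittVector.coeff_truncate]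
    simpa using hx i i.2
  · intro hx i hi
    have := congrArg (fun z => TruncatedWittVector.coeff ⟨i, hi⟩ z) hx
    simpa [WittVector.coeff_truncate] using this

lemma vsm_zero (k : ℕ) : vsm k (0 : 𝕎) := fun i _ => by simp

lemma vsm_add {k : ℕ} {x y : 𝕎} (hx : vsm k x) (hy : vsm k y) : vsm k (x + y) := by
  rw [vsm_iff_truncate] at *
  simp [map_add, hx, hy]

lemma vsm_neg {k : ℕ} {x : 𝕎} (hx : vsm k x) : vsm k (-x) := by
  rw [vsm_iff_truncate] at *
  simp [hx]

lemma vsm_mul_left {k : ℕ} (z : 𝕎) {x : 𝕎} (hx : vsm k x) : vsm k (z * x) := by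
  rw [vsm_iff_truncate] at *
  simp [map_mul, hx]

lemma vsm_mul_right {k : ℕ} (z : 𝕎) {x : 𝕎} (hx : vsm k x) : vsm k (x * z) := by
  rw [vsm_iff_truncate] at *
  simp [map_mul, hx]

lemma vsm_mono {k k' : ℕ} (hk : k' ≤ k) {x : 𝕎} (hx : vsm k x) : vsm k' x :=
  fun i hi => hx i (lt_of_lt_of_le hi hk)

lemma vsm_sum {k : ℕ} {ι : Type*} (s : Finset ι) (g : ι → 𝕎)
    (hg : ∀ c ∈ s, vsm k (g c)) : vsm k (∑ c ∈ s, g c) := by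
  classical
  induction s using Finset.induction_on with
  | empty => simpa using vsm_zero k
  | insert _ _ hnot ih =>
    rw [Finset.sum_insert hnot]
    exact vsm_add (hg _ (Finset.mem_insert_self _ _))
      (ih fun c hc => hg c (Finset.mem_insert_of_mem hc))

lemma vsm_frobenius {k : ℕ} {x : 𝕎} (hx : vsm k x) : vsm k (frobenius x) := by
  intro i hi
  rw [coeff_frobenius_charP, hx i hi]
  exact zero_pow (Fact.out (p := p.Prime)).ne_zero

lemma pk_mul_eq_iterate (k : ℕ) (x : 𝕎) :
    (p : 𝕎) ^ k * x = verschiebung^[k] (frobenius^[k] x) := by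
  induction k with
  | zero => simp
  | succ k ih =>
    have hcomm := (verschiebung_frobenius_comm (p := p) (R := R))
    calc (p : 𝕎) ^ (k+1) * x = (p : 𝕎) * ((p : 𝕎) ^ k * x) := by ring
    _ = ((p : 𝕎) ^ k * x) * p := by ring
    _ = verschiebung (frobenius ((p : 𝕎) ^ k * x)) := (verschiebung_frobenius _).symm
    _ = verschiebung (frobenius (verschiebung^[k] (frobenius^[k] x))) := by rw [ih]
    _ = verschiebung (verschiebung^[k] (frobenius (frobenius^[k] x))) := by
          congr 1
          exact hcomm.symm.iterate_right k (frobenius^[k] x)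
    _ = verschiebung^[k+1] (frobenius^[k+1] x) := by
          rw [Function.iterate_succ_apply', Function.iterate_succ_apply']

lemma iterate_verschiebung_coeff_lt (k : ℕ) (x : 𝕎) {i : ℕ} (hi : i < k) :
    (verschiebung^[k] x).coeff i = 0 := by
  induction k generalizing i with
  | zero => omega
  | succ k ih =>
    rw [Function.iterate_succ_apply']
    cases i with
    | zero => exact verschiebung_coeff_zero _
    | succ j =>
      rw [verschiebung_coeff_succ]
      exact ih (by omega)

lemma vsm_pk_mul (k : ℕ) (y : 𝕎) : vsm k ((p : 𝕎) ^ k * y) := by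
  intro i hi
  rw [pk_mul_eq_iterate]
  exact iterate_verschiebung_coeff_lt k _ hi

section Perfect
variable [PerfectRing R p]

lemma vsm_exists_pk_mul {k : ℕ} {x : 𝕎} (hx : vsm k x) : ∃ y : 𝕎, x = (p : 𝕎) ^ k * y := by
  set z : 𝕎 := WittVector.mk p (fun i => x.coeff (i + k)) with hz
  have hVz : verschiebung^[k] z = x := by
    apply WittVector.ext
    intro i
    rcases lt_or_ge i k with hik | hik
    · rw [iterate_verschiebung_coeff_lt k z hik, hx i hik]
    · obtain ⟨j, rfl⟩ : ∃ j, i = j + k := ⟨i - k, by omega⟩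
      have h5 := iterate_verschiebung_coeff (p := p) z k j
      rw [h5]
      simp [hz, WittVector.mk]
  obtain ⟨y, hy⟩ := ((frobenius_bijective p R).iterate k).surjective z
  refine ⟨y, ?_⟩
  rw [pk_mul_eq_iterate, hy, hVz]

lemma verschiebung_inj {x : 𝕎} (hx : verschiebung x = 0) : x = 0 := by
  apply WittVector.ext
  intro i
  have := congrArg (fun z => WittVector.coeff z (i+1)) hx
  simpa [verschiebung_coeff_succ] using this

lemma p_regular {x : 𝕎} (hx : (p : 𝕎) * x = 0) : x = 0 := by
  rw [show (p : 𝕎) * x = x * p from by ring, ← verschiebung_frobenius] at hx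
  have h1 : frobenius x = 0 := verschiebung_inj hx
  have := (frobenius_bijective p R).injective (a₁ := x) (a₂ := 0)
  simp only [map_zero] at this
  exact this h1

lemma pk_zero {k : ℕ} {x : 𝕎} (hx : (p : 𝕎) ^ k * x = 0) : x = 0 := by
  induction k generalizing x with
  | zero => simpa using hx
  | succ k ih =>
    have h1 : (p : 𝕎) ^ k * ((p:𝕎) * x) = 0 := by
      rw [show (p:𝕎)^k * ((p:𝕎)*x) = (p:𝕎)^(k+1) * x from by ring]
      exact hx
    exact p_regular (ih h1)

lemma pk_regular {k : ℕ} {x y : 𝕎} (hxy : (p : 𝕎) ^ k * x = (p : 𝕎) ^ k * y) : x = y := by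
  have h3 : (p : 𝕎)^k * (x - y) = 0 := by rw [mul_sub, hxy, sub_self]
  exact sub_eq_zero.mp (pk_zero h3)

end Perfect

lemma vsm_all_eq_zero {x : 𝕎} (hx : ∀ k, vsm k x) : x = 0 := by
  apply WittVector.ext
  intro i
  simpa using hx (i+1) i (by omega)

lemma vsm_sub_iff {k : ℕ} {x y : 𝕎} :
    vsm k (x - y) ↔ ∀ i < k, x.coeff i = y.coeff i := by
  rw [vsm_iff_truncate]
  constructor
  · intro hxy i hi
    have h0 : WittVector.truncate k x - WittVector.truncate k y = 0 := by
      rw [← map_sub]; exact hxy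
    have h1 : WittVector.truncate k x = WittVector.truncate k y := sub_eq_zero.mp h0
    have := congrArg (fun z => TruncatedWittVector.coeff ⟨i, hi⟩ z) h1
    simpa [WittVector.coeff_truncate] using this
  · intro hxy
    rw [map_sub, sub_eq_zero]
    apply TruncatedWittVector.ext
    intro i
    rw [WittVector.coeff_truncate, WittVector.coeff_truncate]
    exact hxy i i.2

/-- limit of a Cauchy sequence with rate `e` -/
lemma wlim (f : ℕ → 𝕎) (e : ℕ → ℕ) (he : ∀ k, k ≤ e k) (hmono : Monotone e)
    (hf : ∀ k, vsm (e k) (f (k+1) - f k)) :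
    ∃ L : 𝕎, ∀ k, vsm (e k) (L - f k) := by
  have stab : ∀ k m, k ≤ m → ∀ i < e k, (f m).coeff i = (f k).coeff i := by
    intro k m hkm
    induction m, hkm using Nat.le_induction with
    | base => intro i _; rfl
    | succ m hkm ih =>
      intro i hi
      have h1 := (vsm_sub_iff.mp (hf m)) i (lt_of_lt_of_le hi (hmono hkm))
      rw [h1]; exact ih i hi
  refine ⟨WittVector.mk p (fun i => (f (i+1)).coeff i), ?_⟩
  intro k
  rw [vsm_sub_iff]
  intro i hi
  have hL : (WittVector.mk p (fun i => (f (i+1)).coeff i)).coeff i = (f (i+1)).coeff i := rfl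
  rw [hL]
  have h1 := stab (i+1) (max (i+1) k) (le_max_left _ _) i (lt_of_lt_of_le (Nat.lt_succ_self i) (he (i+1)))
  have h2 := stab k (max (i+1) k) (le_max_right _ _) i hi
  rw [← h1, h2]

section Perfect2
variable [PerfectRing R p]

/-- `1 + p·c` is a unit in `W(R)`. -/
lemma isUnit_one_add_p_mul (c : 𝕎) : IsUnit (1 + (p : 𝕎) * c) := by
  have hdiff : ∀ m : ℕ, vsm m
      ((∑ j ∈ Finset.range (m+1), (-((p:𝕎) * c)) ^ j) - ∑ j ∈ Finset.range m, (-((p:𝕎) * c)) ^ j) := by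
    intro m
    rw [Finset.sum_range_succ, add_sub_cancel_left]
    have hw : (-((p:𝕎) * c)) ^ m = (p:𝕎)^m * (-c)^m := by ring
    rw [hw]; exact vsm_pk_mul m _
  obtain ⟨L, hL⟩ := wlim (fun m => ∑ j ∈ Finset.range m, (-((p:𝕎) * c)) ^ j) id
    (fun k => le_rfl) (fun a b hab => hab) hdiff
  have hmain : ∀ m, vsm m ((1 + (p : 𝕎) * c) * L - 1) := by
    intro m
    have h1 : (1 + (p:𝕎)*c) * (∑ j ∈ Finset.range m, (-((p:𝕎) * c)) ^ j)
        = 1 - (-((p:𝕎) * c)) ^ m := by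
      induction m with
      | zero => simp
      | succ m ih =>
        rw [Finset.sum_range_succ, mul_add, ih, pow_succ]
        ring
    have h2 : (1 + (p : 𝕎) * c) * L - 1
        = (1 + (p:𝕎)*c) * (L - ∑ j ∈ Finset.range m, (-((p:𝕎) * c)) ^ j)
          + (-((-((p:𝕎) * c)) ^ m)) := by
      rw [mul_sub, h1]; ring
    rw [h2]
    apply vsm_add
    · exact vsm_mul_left _ (hL m)
    · apply vsm_neg
      have hw : (-((p:𝕎) * c)) ^ m = (p:𝕎)^m * (-c)^m := by ring
      rw [hw]; exact vsm_pk_mul m _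
  have hz : (1 + (p : 𝕎) * c) * L - 1 = 0 := vsm_all_eq_zero (fun k => hmain k)
  exact IsUnit.of_mul_eq_one _ (sub_eq_zero.mp hz)

end Perfect2

section MatrixLayer
variable {h : ℕ}

local notation "MW" => Matrix (Fin h) (Fin h) (WittVector p R)

/-- entrywise vanishing of coefficients below `k` -/
def Mvsm (k : ℕ) (X : MW) : Prop := ∀ a b, vsm k (X a b)

lemma Mvsm_zero (k : ℕ) : Mvsm k (0 : MW) := fun _ _ => vsm_zero k

lemma Mvsm_add {k : ℕ} {X Y : MW} (hX : Mvsm k X) (hY : Mvsm k Y) : Mvsm k (X + Y) :=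
  fun a b => by simpa [Matrix.add_apply] using vsm_add (hX a b) (hY a b)

lemma Mvsm_neg {k : ℕ} {X : MW} (hX : Mvsm k X) : Mvsm k (-X) :=
  fun a b => by simpa [Matrix.neg_apply] using vsm_neg (hX a b)

lemma Mvsm_sub {k : ℕ} {X Y : MW} (hX : Mvsm k X) (hY : Mvsm k Y) : Mvsm k (X - Y) := by
  rw [sub_eq_add_neg]; exact Mvsm_add hX (Mvsm_neg hY)

lemma Mvsm_mono {k k' : ℕ} (hk : k' ≤ k) {X : MW} (hX : Mvsm k X) : Mvsm k' X :=
  fun a b => vsm_mono hk (hX a b)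

lemma Mvsm_mul_left {k : ℕ} (Z : MW) {X : MW} (hX : Mvsm k X) : Mvsm k (Z * X) := by
  intro a b
  rw [Matrix.mul_apply]
  exact vsm_sum _ _ (fun c _ => vsm_mul_left (Z a c) (hX c b))

lemma Mvsm_mul_right {k : ℕ} (Z : MW) {X : MW} (hX : Mvsm k X) : Mvsm k (X * Z) := by
  intro a b
  rw [Matrix.mul_apply]
  exact vsm_sum _ _ (fun c _ => vsm_mul_right (Z c b) (hX a c))

lemma Mvsm_smul {k : ℕ} (z : WittVector p R) {X : MW} (hX : Mvsm k X) : Mvsm k (z • X) :=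
  fun a b => by simpa [Matrix.smul_apply, smul_eq_mul] using vsm_mul_left z (hX a b)

lemma Mvsm_pk_smul (k : ℕ) (C : MW) : Mvsm k (((p : WittVector p R) ^ k) • C) :=
  fun a b => by simpa [Matrix.smul_apply, smul_eq_mul] using vsm_pk_mul k (C a b)

lemma Mvsm_pk_smul' {k m : ℕ} (hm : k ≤ m) (C : MW) :
    Mvsm k (((p : WittVector p R) ^ m) • C) := by
  obtain ⟨j, rfl⟩ := Nat.exists_eq_add_of_le hm
  intro a b
  simp only [Matrix.smul_apply, smul_eq_mul]
  rw [pow_add, mul_assoc]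
  exact vsm_pk_mul k _
  -- note: pow_add : p^(k+j) = p^k * p^j

lemma Mvsm_frobMap {k : ℕ} {X : MW} (hX : Mvsm k X) : Mvsm k (wittFrobMap p R X) :=
  fun a b => by simpa [wittFrobMap, Matrix.map_apply] using vsm_frobenius (hX a b)

lemma Mvsm_eq {X Y : MW} (hX : ∀ k, Mvsm k (X - Y)) : X = Y := by
  have h0 : X - Y = 0 := by
    refine Matrix.ext fun a b => ?_
    have := vsm_all_eq_zero (x := (X - Y) a b) (fun k => hX k a b)
    simpa using this
  exact sub_eq_zero.mp h0

section MPerfect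
variable [PerfectRing R p]

lemma Mvsm_exists {k : ℕ} {X : MW} (hX : Mvsm k X) :
    ∃ C : MW, X = ((p : WittVector p R) ^ k) • C := by
  refine ⟨Matrix.of (fun a b => (vsm_exists_pk_mul (hX a b)).choose), ?_⟩
  refine Matrix.ext fun a b => ?_
  simpa [Matrix.smul_apply, smul_eq_mul] using (vsm_exists_pk_mul (hX a b)).choose_spec

lemma matCong_iff_Mvsm {k : ℕ} {X Y : MW} :
    matCong ((p : WittVector p R) ^ k) X Y ↔ Mvsm k (X - Y) := by
  constructor
  · rintro ⟨C, hC⟩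
    rw [hC]
    exact Mvsm_pk_smul k C
  · intro hXY
    obtain ⟨C, hC⟩ := Mvsm_exists hXY
    exact ⟨C, hC⟩

lemma Mpk_smul_regular {k : ℕ} {X Y : MW}
    (hXY : ((p : WittVector p R) ^ k) • X = ((p : WittVector p R) ^ k) • Y) : X = Y := by
  refine Matrix.ext fun a b => ?_
  have := congrArg (fun Z => Z a b) hXY
  simp only [Matrix.smul_apply, smul_eq_mul] at this
  exact pk_regular this

lemma Mlim (F : ℕ → MW) (e : ℕ → ℕ) (he : ∀ k, k ≤ e k) (hmono : Monotone e)
    (hF : ∀ k, Mvsm (e k) (F (k+1) - F k)) :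
    ∃ T : MW, ∀ k, Mvsm (e k) (T - F k) := by
  refine ⟨Matrix.of (fun a b =>
    (wlim (fun k => F k a b) e he hmono (fun k => by
      simpa [Matrix.sub_apply] using (hF k a b))).choose), ?_⟩
  intro k a b
  have := (wlim (fun m => F m a b) e he hmono (fun m => by
      simpa [Matrix.sub_apply] using (hF m a b))).choose_spec k
  simpa [Matrix.sub_apply] using this

end MPerfect
end MatrixLayer
section Part4
variable {h : ℕ}

local notation "MW" => Matrix (Fin h) (Fin h) (WittVector p R)

lemma map_matrix_inj {S : Type*} [CommRing S] {f : WittVector p R →+* S}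
    (hf : Function.Injective f) {X Y : MW} (hXY : X.map f = Y.map f) : X = Y := by
  refine Matrix.ext fun a b => ?_
  have := congrArg (fun Z => Z a b) hXY
  simpa [Matrix.map_apply] using hf this

section Perfect4
variable [PerfectRing R p]

lemma diag_const_central {S : Type*} [CommRing S] (v : S) (X : Matrix (Fin h) (Fin h) S) :
    Matrix.diagonal (fun _ => v) * X = X * Matrix.diagonal (fun _ => v) := by
  refine Matrix.ext fun a b => ?_
  rw [Matrix.diagonal_mul, Matrix.mul_diagonal, mul_comm]

lemma mul_comm_pn_smul [PerfectRing R p] {n : ℕ} {A B : MW}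
    (hAB : A * B = ((p : WittVector p R) ^ n) • (1 : MW)) :
    B * A = ((p : WittVector p R) ^ n) • (1 : MW) := by
  classical
  let f : WittVector p R →+* Localization.Away (p : WittVector p R) :=
    algebraMap (WittVector p R) (Localization.Away (p : WittVector p R))
  have hle : Submonoid.powers (p : WittVector p R) ≤ nonZeroDivisors (WittVector p R) := by
    intro x hx
    obtain ⟨k, rfl⟩ := hx
    rw [mem_nonZeroDivisors_iff]
    refine ⟨fun z hz => pk_zero hz, fun z hz => ?_⟩
    exact pk_zero (by rw [mul_comm] at hz; exact hz)
  have finj : Function.Injective f :=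
    IsLocalization.injective (Localization.Away (p : WittVector p R)) hle
  have hu : IsUnit (f ((p : WittVector p R) ^ n)) := by
    have := IsLocalization.map_units (Localization.Away (p : WittVector p R))
      (⟨(p : WittVector p R) ^ n, ⟨n, rfl⟩⟩ : Submonoid.powers (p : WittVector p R))
    simpa using this
  obtain ⟨v, hv⟩ := hu.exists_right_inv
  have hmap_smul_one : (((p : WittVector p R) ^ n) • (1 : MW)).map f
      = Matrix.diagonal (fun _ => f ((p : WittVector p R) ^ n)) := by
    refine Matrix.ext fun a b => ?_
    by_cases hab : a = b
    · subst hab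
      simp [Matrix.map_apply, Matrix.smul_apply, smul_eq_mul, Matrix.one_apply_eq,
        Matrix.diagonal_apply_eq]
    · simp [Matrix.map_apply, Matrix.smul_apply, smul_eq_mul, Matrix.one_apply_ne hab,
        Matrix.diagonal_apply_ne _ hab]
  have hdd : Matrix.diagonal (fun _ : Fin h => f ((p : WittVector p R) ^ n))
      * Matrix.diagonal (fun _ : Fin h => v) = 1 := by
    rw [Matrix.diagonal_mul_diagonal]
    have hfun : (fun i : Fin h => f ((p : WittVector p R) ^ n) * v) = fun _ => (1 : Localization.Away (p : WittVector p R)) :=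
      funext fun _ => hv
    rw [hfun, Matrix.diagonal_one]
  have h1 : (A.map f) * ((B.map f) * Matrix.diagonal (fun _ => v)) = 1 := by
    rw [← mul_assoc, ← Matrix.map_mul, hAB, hmap_smul_one, hdd]
  have h2 := mul_eq_one_comm.mp h1
  have h3 : (B.map f) * (A.map f) * Matrix.diagonal (fun _ => v) = 1 := by
    calc (B.map f) * (A.map f) * Matrix.diagonal (fun _ => v)
        = (B.map f) * ((A.map f) * Matrix.diagonal (fun _ => v)) := mul_assoc _ _ _
      _ = (B.map f) * (Matrix.diagonal (fun _ => v) * (A.map f)) := by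
          rw [diag_const_central]
      _ = ((B.map f) * Matrix.diagonal (fun _ => v)) * (A.map f) := (mul_assoc _ _ _).symm
      _ = 1 := h2
  have h4 : (B * A).map f = (((p : WittVector p R) ^ n) • (1 : MW)).map f := by
    have := congrArg (fun Z => Z * Matrix.diagonal (fun _ : Fin h => f ((p : WittVector p R) ^ n))) h3
    simp only [one_mul] at this
    rw [mul_assoc, Matrix.diagonal_mul_diagonal] at this
    have hvd : (fun i : Fin h => v * f ((p : WittVector p R) ^ n)) = fun _ => (1 : Localization.Away (p : WittVector p R)) := by
      funext i; rw [mul_comm]; exact hv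
    rw [hvd] at this
    rw [Matrix.map_mul, hmap_smul_one]
    simpa [Matrix.diagonal_one] using this
  exact map_matrix_inj finj h4

lemma isUnit_of_mul_cong_one {X G : MW} (hx : Mvsm 1 (X * G - 1)) : IsUnit X := by
  obtain ⟨D, hD⟩ := Mvsm_exists hx
  rw [pow_one] at hD
  have hXG : X * G = 1 + (p : WittVector p R) • D := by
    rw [← hD]; abel
  have hdet : ∃ c : WittVector p R, (X * G).det = 1 + (p : WittVector p R) * c := by
    have hqp : (Ideal.Quotient.mk (Ideal.span {(p : WittVector p R)})) (p : WittVector p R) = 0 :=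
      Ideal.Quotient.eq_zero_iff_mem.mpr (Ideal.mem_span_singleton_self _)
    have hmapq : (X * G).map (Ideal.Quotient.mk (Ideal.span {(p : WittVector p R)})) = 1 := by
      rw [hXG]
      refine Matrix.ext fun a b => ?_
      have he : (1 + (p : WittVector p R) • D) a b
          = (1 : MW) a b + (p : WittVector p R) * D a b := by
        simp [Matrix.add_apply, Matrix.smul_apply, smul_eq_mul]
      rw [Matrix.map_apply, he, RingHom.map_add, RingHom.map_mul, hqp, zero_mul, add_zero]
      by_cases hab : a = b
      · subst hab; simp [Matrix.one_apply_eq]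
      · simp [Matrix.one_apply_ne hab]
    have hq1 : (Ideal.Quotient.mk (Ideal.span {(p : WittVector p R)})) ((X * G).det) = 1 := by
      have h5 := congrArg Matrix.det hmapq
      rw [Matrix.det_one] at h5
      rw [RingHom.map_det]
      exact h5
    have hmem : (X * G).det - 1 ∈ Ideal.span {(p : WittVector p R)} := by
      have : (Ideal.Quotient.mk (Ideal.span {(p : WittVector p R)})) ((X * G).det)
          = (Ideal.Quotient.mk (Ideal.span {(p : WittVector p R)})) 1 := by
        rw [hq1, map_one]
      exact Ideal.Quotient.eq.mp this
    obtain ⟨c, hc⟩ := Ideal.mem_span_singleton'.mp hmem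
    exact ⟨c, by have := hc; linear_combination -this⟩
  obtain ⟨c, hc⟩ := hdet
  have hunit : IsUnit ((X * G).det) := by rw [hc]; exact isUnit_one_add_p_mul c
  rw [Matrix.det_mul] at hunit
  exact Matrix.isUnit_iff_isUnit_det X |>.mpr (isUnit_of_mul_isUnit_left hunit)

end Perfect4
end Part4

section FrobMapLemmas
variable {h : ℕ}
local notation "MW" => Matrix (Fin h) (Fin h) (WittVector p R)

lemma frobMap_sub (X Y : MW) :
    wittFrobMap p R (X - Y) = wittFrobMap p R X - wittFrobMap p R Y := by
  refine Matrix.ext fun a b => ?_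
  simp [wittFrobMap, Matrix.map_apply, Matrix.sub_apply, RingHom.map_sub]

lemma frobMap_add (X Y : MW) :
    wittFrobMap p R (X + Y) = wittFrobMap p R X + wittFrobMap p R Y := by
  refine Matrix.ext fun a b => ?_
  simp [wittFrobMap, Matrix.map_apply, Matrix.add_apply, RingHom.map_add]

lemma frobMap_mul (X Y : MW) :
    wittFrobMap p R (X * Y) = wittFrobMap p R X * wittFrobMap p R Y :=
  Matrix.map_mul

lemma frobMap_pk_smul (m : ℕ) (X : MW) :
    wittFrobMap p R (((p : WittVector p R) ^ m) • X)
      = ((p : WittVector p R) ^ m) • wittFrobMap p R X := by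
  refine Matrix.ext fun a b => ?_
  simp only [wittFrobMap, Matrix.map_apply, Matrix.smul_apply, smul_eq_mul, RingHom.map_mul]
  congr 1
  rw [RingHom.map_pow, map_natCast]

lemma frobMap_one : wittFrobMap p R (1 : MW) = 1 :=
  Matrix.map_one _ (map_zero _) (map_one _)

lemma frobMap_pk_smul_one (m : ℕ) :
    wittFrobMap p R (((p : WittVector p R) ^ m) • (1 : MW))
      = ((p : WittVector p R) ^ m) • (1 : MW) := by
  rw [frobMap_pk_smul, frobMap_one]

end FrobMapLemmas

/-- The Newton-type iteration fixing `A0 * B0 = pⁿ` while preserving the `J`-compatibility. -/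
noncomputable def isoSeq (p : ℕ) [Fact p.Prime] (R : Type) [CommRing R] {h : ℕ}
    (J1 J2 : Matrix (Fin h) (Fin h) (WittVector p R)) (N n : ℕ)
    (B0i Bmi Ci : Matrix (Fin h) (Fin h) (WittVector p R)) :
    ℕ → (Matrix (Fin h) (Fin h) (WittVector p R)) × (Matrix (Fin h) (Fin h) (WittVector p R))
        × (Matrix (Fin h) (Fin h) (WittVector p R))
  | 0 => (B0i, Bmi, Ci)
  | (k+1) =>
      let T := isoSeq p R J1 J2 N n B0i Bmi Ci k
      (T.1 - (p : WittVector p R)^(N+k-n) • (T.1 * T.2.2),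
       T.2.1 - (p : WittVector p R)^(N+k-n-1) • (T.2.1 * (J1 * T.2.2 * J2)),
       -((p : WittVector p R)^(N+k-n-1) • (T.2.2 * T.2.2)))

/-- Lifting truncated height-`n` isogenies over perfect rings, in banal coordinates:
there is `M ≥ n`, depending only on `p, h, n`, such that for every perfect ring `R` of
characteristic `p`, every `0 ≤ d ≤ h`, every `N ≥ M + 1`, and every datum
`(A⁰, A⁻¹, B⁰, B⁻¹, g')` satisfying, modulo `p^N`, the height-`n` isogeny identities
relative to the invertible matrix `g` and the block matrices `J₁ = diag(p·1_{h-d}, 1_d)`,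
`J₂ = diag(1_{h-d}, p·1_d)`, there is an exact such datum `(Ã⁰, Ã⁻¹, B̃⁰, B̃⁻¹, g̃')`
congruent to the given one modulo `p^(N-M)`. -/
theorem stmt_16 (p : ℕ) [Fact p.Prime] (h n : ℕ) (hh : 1 ≤ h) (hn : 1 ≤ n) :
    ∃ M : ℕ, n ≤ M ∧
      ∀ (R : Type) [CommRing R] [CharP R p] [PerfectRing R p],
      ∀ d : ℕ, d ≤ h →
      ∀ N : ℕ, M + 1 ≤ N →
      ∀ g A0 Am B0 Bm g' : Matrix (Fin h) (Fin h) (WittVector p R),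
        IsUnit g →
        -- g' is invertible modulo p^N
        (∃ g'' : Matrix (Fin h) (Fin h) (WittVector p R),
          matCong ((p : WittVector p R) ^ N) (g' * g'') 1 ∧
          matCong ((p : WittVector p R) ^ N) (g'' * g') 1) →
        -- (a) isogeny relations mod p^N
        matCong ((p : WittVector p R) ^ N) (A0 * B0)
          ((p : WittVector p R) ^ n • (1 : Matrix (Fin h) (Fin h) (WittVector p R))) →
        matCong ((p : WittVector p R) ^ N) (B0 * A0)
          ((p : WittVector p R) ^ n • (1 : Matrix (Fin h) (Fin h) (WittVector p R))) →
        matCong ((p : WittVector p R) ^ N) (Am * Bm)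
          ((p : WittVector p R) ^ n • (1 : Matrix (Fin h) (Fin h) (WittVector p R))) →
        matCong ((p : WittVector p R) ^ N) (Bm * Am)
          ((p : WittVector p R) ^ n • (1 : Matrix (Fin h) (Fin h) (WittVector p R))) →
        -- (b) compatibility with J₁, J₂ mod p^N
        matCong ((p : WittVector p R) ^ N)
          (A0 * Matrix.diagonal (fun i : Fin h =>
            if (i : ℕ) < h - d then (1 : WittVector p R) else (p : WittVector p R)))
          ((Matrix.diagonal (fun i : Fin h =>
            if (i : ℕ) < h - d then (1 : WittVector p R) else (p : WittVector p R))) * Am) →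
        matCong ((p : WittVector p R) ^ N)
          ((Matrix.diagonal (fun i : Fin h =>
            if (i : ℕ) < h - d then (p : WittVector p R) else (1 : WittVector p R))) * A0)
          (Am * Matrix.diagonal (fun i : Fin h =>
            if (i : ℕ) < h - d then (p : WittVector p R) else (1 : WittVector p R))) →
        matCong ((p : WittVector p R) ^ N)
          (B0 * Matrix.diagonal (fun i : Fin h =>
            if (i : ℕ) < h - d then (1 : WittVector p R) else (p : WittVector p R)))
          ((Matrix.diagonal (fun i : Fin h =>
            if (i : ℕ) < h - d then (1 : WittVector p R) else (p : WittVector p R))) * Bm) →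
        matCong ((p : WittVector p R) ^ N)
          ((Matrix.diagonal (fun i : Fin h =>
            if (i : ℕ) < h - d then (p : WittVector p R) else (1 : WittVector p R))) * B0)
          (Bm * Matrix.diagonal (fun i : Fin h =>
            if (i : ℕ) < h - d then (p : WittVector p R) else (1 : WittVector p R))) →
        -- (c) Frobenius compatibility mod p^N
        matCong ((p : WittVector p R) ^ N) (Am * g) (g' * wittFrobMap p R A0) →
        matCong ((p : WittVector p R) ^ N) (Bm * g') (g * wittFrobMap p R B0) →
        -- conclusion: exact lifts congruent mod p^(N-M)
        ∃ tA0 tAm tB0 tBm tg' : Matrix (Fin h) (Fin h) (WittVector p R),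
          IsUnit tg' ∧
          matCong ((p : WittVector p R) ^ (N - M)) tA0 A0 ∧
          matCong ((p : WittVector p R) ^ (N - M)) tAm Am ∧
          matCong ((p : WittVector p R) ^ (N - M)) tB0 B0 ∧
          matCong ((p : WittVector p R) ^ (N - M)) tBm Bm ∧
          matCong ((p : WittVector p R) ^ (N - M)) tg' g' ∧
          tA0 * tB0 = (p : WittVector p R) ^ n • (1 : Matrix (Fin h) (Fin h) (WittVector p R)) ∧
          tB0 * tA0 = (p : WittVector p R) ^ n • (1 : Matrix (Fin h) (Fin h) (WittVector p R)) ∧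
          tAm * tBm = (p : WittVector p R) ^ n • (1 : Matrix (Fin h) (Fin h) (WittVector p R)) ∧
          tBm * tAm = (p : WittVector p R) ^ n • (1 : Matrix (Fin h) (Fin h) (WittVector p R)) ∧
          tA0 * Matrix.diagonal (fun i : Fin h =>
              if (i : ℕ) < h - d then (1 : WittVector p R) else (p : WittVector p R))
            = (Matrix.diagonal (fun i : Fin h =>
              if (i : ℕ) < h - d then (1 : WittVector p R) else (p : WittVector p R))) * tAm ∧
          (Matrix.diagonal (fun i : Fin h =>
              if (i : ℕ) < h - d then (p : WittVector p R) else (1 : WittVector p R))) * tA0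
            = tAm * Matrix.diagonal (fun i : Fin h =>
              if (i : ℕ) < h - d then (p : WittVector p R) else (1 : WittVector p R)) ∧
          tB0 * Matrix.diagonal (fun i : Fin h =>
              if (i : ℕ) < h - d then (1 : WittVector p R) else (p : WittVector p R))
            = (Matrix.diagonal (fun i : Fin h =>
              if (i : ℕ) < h - d then (1 : WittVector p R) else (p : WittVector p R))) * tBm ∧
          (Matrix.diagonal (fun i : Fin h =>
              if (i : ℕ) < h - d then (p : WittVector p R) else (1 : WittVector p R))) * tB0
            = tBm * Matrix.diagonal (fun i : Fin h =>
              if (i : ℕ) < h - d then (p : WittVector p R) else (1 : WittVector p R)) ∧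
          tAm * g = tg' * wittFrobMap p R tA0 ∧
          tBm * tg' = g * wittFrobMap p R tB0 := by
  refine ⟨2*n+2, by omega, ?_⟩
  intro R _ _ _ d hd N hN g A0 Am B0 Bm g' hg hg'inv ha1 ha2 ha3 ha4 hb1 hb2 hb3 hb4 hc1 hc2
  clear ha2 ha3 ha4 hb2 hb4 hc2 hg hd
  let W := WittVector p R
  set J2 : Matrix (Fin h) (Fin h) W := Matrix.diagonal (fun i : Fin h =>
      if (i : ℕ) < h - d then (1 : W) else (p : W)) with hJ2def
  set J1 : Matrix (Fin h) (Fin h) W := Matrix.diagonal (fun i : Fin h =>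
      if (i : ℕ) < h - d then (p : W) else (1 : W)) with hJ1def
  have hNn : 2*n + 3 ≤ N := by omega
  -- basic facts about J1, J2
  have hd1vals : ∀ i : Fin h, (if (i : ℕ) < h - d then (p : W) else (1 : W)) = 1 ∨
      (if (i : ℕ) < h - d then (p : W) else (1 : W)) = (p : W) := by
    intro i; by_cases hi : (i:ℕ) < h - d <;> simp [hi]
  have hd2vals : ∀ i : Fin h, (if (i : ℕ) < h - d then (1 : W) else (p : W)) = 1 ∨
      (if (i : ℕ) < h - d then (1 : W) else (p : W)) = (p : W) := by
    intro i; by_cases hi : (i:ℕ) < h - d <;> simp [hi]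
  have hfun1 : (fun i : Fin h => (if (i:ℕ) < h - d then (p:W) else 1)
      * (if (i:ℕ) < h - d then (1:W) else p)) = fun _ => (p:W) := by
    funext i; by_cases hi : (i:ℕ) < h - d <;> simp [hi]
  have hfun2 : (fun i : Fin h => (if (i:ℕ) < h - d then (1:W) else p)
      * (if (i:ℕ) < h - d then (p:W) else 1)) = fun _ => (p:W) := by
    funext i; by_cases hi : (i:ℕ) < h - d <;> simp [hi]
  have hJ12 : J1 * J2 = (p : W) • (1 : Matrix (Fin h) (Fin h) W) := by
    rw [hJ1def, hJ2def, Matrix.diagonal_mul_diagonal, hfun1, Matrix.smul_one_eq_diagonal]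
  have hJ21 : J2 * J1 = (p : W) • (1 : Matrix (Fin h) (Fin h) W) := by
    rw [hJ1def, hJ2def, Matrix.diagonal_mul_diagonal, hfun2, Matrix.smul_one_eq_diagonal]
  -- cancellation by J2
  have hJ2cl : ∀ X Y : Matrix (Fin h) (Fin h) W, J2 * X = J2 * Y → X = Y := by
    intro X Y hXY
    refine Matrix.ext fun a b => ?_
    have := congrArg (fun Z => Z a b) hXY
    simp only [hJ2def, Matrix.diagonal_mul] at this
    rcases hd2vals a with hv | hv
    · rw [hv, one_mul, one_mul] at this; exact this
    · rw [hv] at this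
      have h0 : (p : W) * (X a b - Y a b) = 0 := by rw [mul_sub, this, sub_self]
      exact sub_eq_zero.mp (p_regular h0) ▸ rfl
  have hJ2cr : ∀ X Y : Matrix (Fin h) (Fin h) W, X * J2 = Y * J2 → X = Y := by
    intro X Y hXY
    refine Matrix.ext fun a b => ?_
    have := congrArg (fun Z => Z a b) hXY
    rw [hJ2def, Matrix.mul_diagonal, Matrix.mul_diagonal] at this
    rcases hd2vals b with hv | hv
    · rw [hv, mul_one, mul_one] at this; exact this
    · rw [hv, mul_comm (X a b), mul_comm (Y a b)] at this
      have h0 : (p : W) * (X a b - Y a b) = 0 := by rw [mul_sub, this, sub_self]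
      exact sub_eq_zero.mp (p_regular h0) ▸ rfl
  -- extract defect matrices
  obtain ⟨C0, hC0⟩ := ha1
  obtain ⟨C1, hC1⟩ := hb1
  obtain ⟨C3, hC3⟩ := hb3
  obtain ⟨F1, hF1⟩ := hc1
  obtain ⟨g'', hg1, hg2⟩ := hg'inv
  have hsmm : ∀ (x y z : ℕ), x + y = z → ∀ Q : Matrix (Fin h) (Fin h) W,
      ((p:W)^x) • (((p:W)^y) • Q) = ((p:W)^z) • Q := by
    intro x y z hxyz Q
    rw [smul_smul, ← pow_add, hxyz]
  have hsmp : ∀ (x z : ℕ), x + 1 = z → ∀ Q : Matrix (Fin h) (Fin h) W,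
      ((p:W)^x) • ((p:W) • Q) = ((p:W)^z) • Q := by
    intro x z hxz Q
    rw [smul_smul, ← pow_succ, hxz]
  have hJ21X : ∀ X : Matrix (Fin h) (Fin h) W, J2 * (J1 * X) = (p:W) • X := by
    intro X
    rw [← mul_assoc, hJ21, Matrix.smul_mul, one_mul]
  -- preprocessing: make the J-compatibility exact
  set tAm := Am + (p:W)^(N-1) • (J1 * C1) with htAmdef
  have hA0J2 : A0 * J2 = J2 * tAm := by
    have hcomp : J2 * tAm = J2 * Am + (p:W)^N • C1 := by
      rw [htAmdef, mul_add, Matrix.mul_smul, hJ21X, hsmp (N-1) N (by omega)]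
    rw [hcomp, ← hC1]
    abel
  set Bm0 := Bm + (p:W)^(N-1) • (J1 * C3) with hBm0def
  have hB0J2 : B0 * J2 = J2 * Bm0 := by
    have hcomp : J2 * Bm0 = J2 * Bm + (p:W)^N • C3 := by
      rw [hBm0def, mul_add, Matrix.mul_smul, hJ21X, hsmp (N-1) N (by omega)]
    rw [hcomp, ← hC3]
    abel
  -- the iteration
  set seq := isoSeq p R J1 J2 N n B0 Bm0 C0 with hseqdef
  have hseq0 : seq 0 = (B0, Bm0, C0) := rfl
  have hseqS : ∀ k, seq (k+1) = ((seq k).1 - (p : W)^(N+k-n) • ((seq k).1 * (seq k).2.2),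
       (seq k).2.1 - (p : W)^(N+k-n-1) • ((seq k).2.1 * (J1 * (seq k).2.2 * J2)),
       -((p : W)^(N+k-n-1) • ((seq k).2.2 * (seq k).2.2))) := fun k => rfl
  have hInv : ∀ k, (A0 * (seq k).1
        = (p:W)^n • (1 : Matrix (Fin h) (Fin h) W) + (p:W)^(N+k) • (seq k).2.2)
      ∧ ((seq k).1 * J2 = J2 * (seq k).2.1) := by
    intro k
    induction k with
    | zero =>
      rw [hseq0]
      constructor
      · show A0 * B0 = (p:W)^n • 1 + (p:W)^(N+0) • C0
        rw [Nat.add_zero, ← hC0]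
        abel
      · exact hB0J2
    | succ k ih =>
      obtain ⟨ih1, ih2⟩ := ih
      rw [hseqS k]
      constructor
      · show A0 * ((seq k).1 - (p : W)^(N+k-n) • ((seq k).1 * (seq k).2.2))
          = (p:W)^n • 1 + (p:W)^(N+(k+1)) • (-((p : W)^(N+k-n-1) • ((seq k).2.2 * (seq k).2.2)))
        have key1 : (p : W)^(N+k-n) • (((p:W)^n • (1 : Matrix (Fin h) (Fin h) W)
              + (p:W)^(N+k) • (seq k).2.2) * (seq k).2.2)
            = (p:W)^(N+k) • (seq k).2.2
              + (p:W)^(2*(N+k)-n) • ((seq k).2.2 * (seq k).2.2) := by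
          rw [add_mul, Matrix.smul_mul, one_mul, Matrix.smul_mul, smul_add,
            hsmm (N+k-n) n (N+k) (by omega), hsmm (N+k-n) (N+k) (2*(N+k)-n) (by omega)]
        have key2 : (p:W)^(N+(k+1)) • (-((p : W)^(N+k-n-1) • ((seq k).2.2 * (seq k).2.2)))
            = -((p:W)^(2*(N+k)-n) • ((seq k).2.2 * (seq k).2.2)) := by
          rw [smul_neg, hsmm (N+(k+1)) (N+k-n-1) (2*(N+k)-n) (by omega)]
        calc A0 * ((seq k).1 - (p : W)^(N+k-n) • ((seq k).1 * (seq k).2.2))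
            = A0 * (seq k).1 - (p : W)^(N+k-n) • ((A0 * (seq k).1) * (seq k).2.2) := by
              rw [mul_sub, Matrix.mul_smul, mul_assoc]
          _ = ((p:W)^n • 1 + (p:W)^(N+k) • (seq k).2.2)
              - ((p:W)^(N+k) • (seq k).2.2
                + (p:W)^(2*(N+k)-n) • ((seq k).2.2 * (seq k).2.2)) := by
              rw [ih1, key1]
          _ = (p:W)^n • 1 + (p:W)^(N+(k+1)) • (-((p : W)^(N+k-n-1)
                • ((seq k).2.2 * (seq k).2.2))) := by
              rw [key2]; abel
      · show ((seq k).1 - (p : W)^(N+k-n) • ((seq k).1 * (seq k).2.2)) * J2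
          = J2 * ((seq k).2.1 - (p : W)^(N+k-n-1) • ((seq k).2.1 * (J1 * (seq k).2.2 * J2)))
        have hmid : J2 * ((seq k).2.1 * ((J1 * (seq k).2.2) * J2))
            = (p:W) • ((seq k).1 * ((seq k).2.2 * J2)) := by
          rw [← mul_assoc, ← ih2, mul_assoc, ← mul_assoc J2, hJ21X, Matrix.smul_mul,
            Matrix.mul_smul]
        calc ((seq k).1 - (p : W)^(N+k-n) • ((seq k).1 * (seq k).2.2)) * J2
            = (seq k).1 * J2 - (p : W)^(N+k-n) • ((seq k).1 * ((seq k).2.2 * J2)) := by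
              rw [sub_mul, Matrix.smul_mul, mul_assoc]
          _ = J2 * (seq k).2.1 - (p : W)^(N+k-n-1)
                • ((p:W) • ((seq k).1 * ((seq k).2.2 * J2))) := by
              rw [ih2, hsmp (N+k-n-1) (N+k-n) (by omega)]
          _ = J2 * ((seq k).2.1 - (p : W)^(N+k-n-1)
                • ((seq k).2.1 * (J1 * (seq k).2.2 * J2))) := by
              rw [mul_sub, Matrix.mul_smul, hmid]
  -- limits
  have hdiffB : ∀ k, Mvsm (N+k-n) ((seq (k+1)).1 - (seq k).1) := by
    intro k
    rw [hseqS k]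
    have he : ((seq k).1 - (p : W)^(N+k-n) • ((seq k).1 * (seq k).2.2)) - (seq k).1
        = -((p:W)^(N+k-n) • ((seq k).1 * (seq k).2.2)) := by abel
    show Mvsm (N+k-n) (((seq k).1 - (p : W)^(N+k-n) • ((seq k).1 * (seq k).2.2)) - (seq k).1)
    rw [he]
    exact Mvsm_neg (Mvsm_pk_smul _ _)
  obtain ⟨tB0, htB0⟩ := Mlim (fun k => (seq k).1) (fun k => N+k-n)
    (fun k => by show k ≤ N+k-n; omega) (fun a b hab => by show N+a-n ≤ N+b-n; omega) hdiffB
  have hdiffBm : ∀ k, Mvsm (N+k-n-1) ((seq (k+1)).2.1 - (seq k).2.1) := by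
    intro k
    rw [hseqS k]
    have he : ((seq k).2.1 - (p : W)^(N+k-n-1) • ((seq k).2.1 * (J1 * (seq k).2.2 * J2)))
          - (seq k).2.1
        = -((p:W)^(N+k-n-1) • ((seq k).2.1 * (J1 * (seq k).2.2 * J2))) := by abel
    show Mvsm (N+k-n-1) (((seq k).2.1
        - (p : W)^(N+k-n-1) • ((seq k).2.1 * (J1 * (seq k).2.2 * J2))) - (seq k).2.1)
    rw [he]
    exact Mvsm_neg (Mvsm_pk_smul _ _)
  obtain ⟨tBm, htBm⟩ := Mlim (fun k => (seq k).2.1) (fun k => N+k-n-1)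
    (fun k => by show k ≤ N+k-n-1; omega) (fun a b hab => by show N+a-n-1 ≤ N+b-n-1; omega) hdiffBm
  -- exact relations
  have hAB : A0 * tB0 = (p:W)^n • (1 : Matrix (Fin h) (Fin h) W) := by
    apply Mvsm_eq
    intro k
    have hk1 : A0 * tB0 - (p:W)^n • (1 : Matrix (Fin h) (Fin h) W)
        = A0 * (tB0 - (seq k).1) + (p:W)^(N+k) • (seq k).2.2 := by
      rw [mul_sub, (hInv k).1]
      abel
    rw [hk1]
    apply Mvsm_add
    · exact Mvsm_mono (by omega) (Mvsm_mul_left _ (htB0 k))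
    · exact Mvsm_pk_smul' (by omega) _
  have hBJ2 : tB0 * J2 = J2 * tBm := by
    apply Mvsm_eq
    intro k
    have hk1 : tB0 * J2 - J2 * tBm
        = (tB0 - (seq k).1) * J2 - J2 * (tBm - (seq k).2.1) := by
      rw [sub_mul, mul_sub, (hInv k).2]
      abel
    rw [hk1]
    exact Mvsm_sub (Mvsm_mono (by omega) (Mvsm_mul_right _ (htB0 k)))
      (Mvsm_mono (by omega) (Mvsm_mul_left _ (htBm k)))
  have hBA : tB0 * A0 = (p:W)^n • (1 : Matrix (Fin h) (Fin h) W) := mul_comm_pn_smul hAB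
  have hAmJ1 : J1 * A0 = tAm * J1 := by
    apply hJ2cr
    have l1 : (J1 * A0) * J2 = (p:W) • tAm := by
      rw [mul_assoc, hA0J2, ← mul_assoc, hJ12, Matrix.smul_mul, one_mul]
    have l2 : (tAm * J1) * J2 = (p:W) • tAm := by
      rw [mul_assoc, hJ12, Matrix.mul_smul, mul_one]
    rw [l1, l2]
  have hBmJ1 : J1 * tB0 = tBm * J1 := by
    apply hJ2cr
    have l1 : (J1 * tB0) * J2 = (p:W) • tBm := by
      rw [mul_assoc, hBJ2, ← mul_assoc, hJ12, Matrix.smul_mul, one_mul]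
    have l2 : (tBm * J1) * J2 = (p:W) • tBm := by
      rw [mul_assoc, hJ12, Matrix.mul_smul, mul_one]
    rw [l1, l2]
  have hAmBm : tAm * tBm = (p:W)^n • (1 : Matrix (Fin h) (Fin h) W) := by
    apply hJ2cl
    calc J2 * (tAm * tBm) = (J2 * tAm) * tBm := (mul_assoc _ _ _).symm
      _ = (A0 * J2) * tBm := by rw [hA0J2]
      _ = A0 * (J2 * tBm) := mul_assoc _ _ _
      _ = A0 * (tB0 * J2) := by rw [hBJ2]
      _ = (A0 * tB0) * J2 := (mul_assoc _ _ _).symm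
      _ = ((p:W)^n • (1 : Matrix (Fin h) (Fin h) W)) * J2 := by rw [hAB]
      _ = J2 * ((p:W)^n • (1 : Matrix (Fin h) (Fin h) W)) := by
          rw [Matrix.smul_mul, one_mul, Matrix.mul_smul, mul_one]
  have hBmAm : tBm * tAm = (p:W)^n • (1 : Matrix (Fin h) (Fin h) W) := by
    apply hJ2cl
    calc J2 * (tBm * tAm) = (J2 * tBm) * tAm := (mul_assoc _ _ _).symm
      _ = (tB0 * J2) * tAm := by rw [hBJ2]
      _ = tB0 * (J2 * tAm) := mul_assoc _ _ _
      _ = tB0 * (A0 * J2) := by rw [hA0J2]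
      _ = (tB0 * A0) * J2 := (mul_assoc _ _ _).symm
      _ = ((p:W)^n • (1 : Matrix (Fin h) (Fin h) W)) * J2 := by rw [hBA]
      _ = J2 * ((p:W)^n • (1 : Matrix (Fin h) (Fin h) W)) := by
          rw [Matrix.smul_mul, one_mul, Matrix.mul_smul, mul_one]
  -- construction of tg'
  set Z := tAm * g * (wittFrobMap p R tB0) - (p:W)^n • g' with hZdef
  have hsg : g' * ((p:W)^n • (1 : Matrix (Fin h) (Fin h) W)) = (p:W)^n • g' := by
    rw [Matrix.mul_smul, mul_one]
  have hdec : Z = (tAm - Am) * (g * wittFrobMap p R tB0)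
      + (Am * g) * (wittFrobMap p R tB0 - wittFrobMap p R B0)
      + ((Am * g - g' * wittFrobMap p R A0) * wittFrobMap p R B0)
      + (g' * (wittFrobMap p R A0 * wittFrobMap p R B0
          - (p:W)^n • (1 : Matrix (Fin h) (Fin h) W))) := by
    rw [hZdef]
    simp only [sub_mul, mul_sub, mul_assoc]
    rw [hsg]
    abel
  have hZsm : Mvsm (N-n) Z := by
    rw [hdec]
    apply Mvsm_add
    apply Mvsm_add
    apply Mvsm_add
    · have h1 : tAm - Am = (p:W)^(N-1) • (J1 * C1) := by
        rw [htAmdef, add_sub_cancel_left]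
      rw [h1]
      exact Mvsm_mul_right _ (Mvsm_pk_smul' (by omega) _)
    · have h2 : wittFrobMap p R tB0 - wittFrobMap p R B0
          = wittFrobMap p R (tB0 - B0) := (frobMap_sub _ _).symm
      rw [h2]
      have h3 : Mvsm (N-n) (tB0 - B0) := by
        have := htB0 0
        simp only [Nat.add_zero] at this
        exact this
      exact Mvsm_mul_left _ (Mvsm_frobMap h3)
    · rw [hF1]
      exact Mvsm_mul_right _ (Mvsm_pk_smul' (by omega) _)
    · have h4 : wittFrobMap p R A0 * wittFrobMap p R B0
          - (p:W)^n • (1 : Matrix (Fin h) (Fin h) W)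
          = (p:W)^N • (wittFrobMap p R C0) := by
        rw [← frobMap_mul]
        have hab : A0 * B0 = (p:W)^n • (1 : Matrix (Fin h) (Fin h) W) + (p:W)^N • C0 := by
          rw [← hC0]; abel
        rw [hab, frobMap_add, frobMap_pk_smul_one, frobMap_pk_smul]
        abel
      rw [h4]
      exact Mvsm_mul_left _ (Mvsm_pk_smul' (by omega) _)
  obtain ⟨Y, hY⟩ := Mvsm_exists hZsm
  set tgv := g' + (p:W)^(N-2*n) • Y with htgdef
  have hpntg : (p:W)^n • tgv = tAm * g * wittFrobMap p R tB0 := by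
    rw [htgdef, smul_add, hsmm n (N-2*n) (N-n) (by omega), ← hY, hZdef]
    abel
  have hc1' : tAm * g = tgv * wittFrobMap p R A0 := by
    have hmain : (p:W)^n • (tgv * wittFrobMap p R A0) = (p:W)^n • (tAm * g) := by
      calc (p:W)^n • (tgv * wittFrobMap p R A0)
          = ((p:W)^n • tgv) * wittFrobMap p R A0 := (Matrix.smul_mul _ _ _).symm
        _ = (tAm * g * wittFrobMap p R tB0) * wittFrobMap p R A0 := by rw [hpntg]
        _ = (tAm * g) * (wittFrobMap p R tB0 * wittFrobMap p R A0) := mul_assoc _ _ _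
        _ = (tAm * g) * wittFrobMap p R (tB0 * A0) := by rw [frobMap_mul]
        _ = (tAm * g) * ((p:W)^n • (1 : Matrix (Fin h) (Fin h) W)) := by
            rw [hBA, frobMap_pk_smul_one]
        _ = (p:W)^n • (tAm * g) := by rw [Matrix.mul_smul, mul_one]
    exact (Mpk_smul_regular hmain).symm
  have hc2' : tBm * tgv = g * wittFrobMap p R tB0 := by
    have hmain : (p:W)^n • (tBm * tgv) = (p:W)^n • (g * wittFrobMap p R tB0) := by
      calc (p:W)^n • (tBm * tgv)
          = tBm * ((p:W)^n • tgv) := by rw [Matrix.mul_smul]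
        _ = tBm * (tAm * g * wittFrobMap p R tB0) := by rw [hpntg]
        _ = ((tBm * tAm) * g) * wittFrobMap p R tB0 := by
            rw [← mul_assoc, ← mul_assoc]
        _ = (((p:W)^n • (1 : Matrix (Fin h) (Fin h) W)) * g) * wittFrobMap p R tB0 := by
            rw [hBmAm]
        _ = (p:W)^n • (g * wittFrobMap p R tB0) := by
            rw [Matrix.smul_mul, one_mul, Matrix.smul_mul]
    exact Mpk_smul_regular hmain
  have hunit : IsUnit tgv := by
    apply isUnit_of_mul_cong_one (G := g'')
    have hdc : tgv * g'' - 1 = ((p:W)^(N-2*n) • Y) * g'' + (g' * g'' - 1) := by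
      rw [htgdef, add_mul]; abel
    rw [hdc]
    apply Mvsm_add
    · exact Mvsm_mul_right _ (Mvsm_pk_smul' (by omega) _)
    · exact Mvsm_mono (by omega) (matCong_iff_Mvsm.mp hg1)
  refine ⟨A0, tAm, tB0, tBm, tgv, hunit, ?_, ?_, ?_, ?_, ?_,
    hAB, hBA, hAmBm, hBmAm, hA0J2, hAmJ1, hBJ2, hBmJ1, hc1', hc2'⟩
  · exact ⟨0, by simp⟩
  · apply matCong_iff_Mvsm.mpr
    have h1 : tAm - Am = (p:W)^(N-1) • (J1 * C1) := by
      rw [htAmdef, add_sub_cancel_left]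
    rw [h1]
    exact Mvsm_pk_smul' (by omega) _
  · apply matCong_iff_Mvsm.mpr
    have := htB0 0
    simp only [Nat.add_zero] at this
    exact Mvsm_mono (by omega) this
  · apply matCong_iff_Mvsm.mpr
    have h1 : tBm - Bm = (tBm - (seq 0).2.1) + ((p:W)^(N-1) • (J1 * C3)) := by
      rw [hseq0]
      show tBm - Bm = (tBm - Bm0) + ((p:W)^(N-1) • (J1 * C3))
      rw [hBm0def]
      abel
    rw [h1]
    apply Mvsm_add
    · have := htBm 0
      simp only [Nat.add_zero] at this
      exact Mvsm_mono (by omega) this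
    · exact Mvsm_pk_smul' (by omega) _
  · apply matCong_iff_Mvsm.mpr
    have h1 : tgv - g' = (p:W)^(N-2*n) • Y := by
      rw [htgdef, add_sub_cancel_left]
    rw [h1]
    exact Mvsm_pk_smul' (by omega) _
end
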